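/- arXiv:1409.3418 — 5 statements merged into one kernel-verified Lean document; each statement's English description precedes it below -/
import Mathlib

section
/- Let E ⊆ [0,∞) with 0 ∈ E be such that 0 is an accumulation point of E, and regard E as a pointed metric space with the metric induced from ℝ and marked point 0. Then the equality C_E = R*_n(E,0) holds (as elements of [0,∞]). -/
open Filter Topology Set
open scoped ENNReal

/-- A scaling sequence: strictly positive reals tending to zero. -/
def ScalingSeq (r : ℕ → ℝ) : Prop :=
  (∀ n, 0 < r n) ∧ Tendsto r atTop (𝓝 (0 : ℝ))

/-- Two sequences of points are mutually stable w.r.t. a scaling sequence. -/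
def MutuallyStable {X : Type*} [MetricSpace X] (r : ℕ → ℝ) (x y : ℕ → X) : Prop :=
  ∃ L : ℝ, Tendsto (fun n => dist (x n) (y n) / r n) atTop (𝓝 L)

/-- A family of sequences is self-stable w.r.t. a scaling sequence. -/
def SelfStable {X : Type*} [MetricSpace X] (r : ℕ → ℝ) (F : Set (ℕ → X)) : Prop :=
  ∀ x ∈ F, ∀ y ∈ F, MutuallyStable r x y

/-- A maximal self-stable family. -/
def MaxSelfStable {X : Type*} [MetricSpace X] (r : ℕ → ℝ) (F : Set (ℕ → X)) : Prop :=
  SelfStable r F ∧ ∀ G : Set (ℕ → X), SelfStable r G → F ⊆ G → G = F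

/-- A sequence of reals is eventually decreasing. -/
def EvDecr (τ : ℕ → ℝ) : Prop := ∀ᶠ n in atTop, τ (n + 1) ≤ τ n

/-- A normal scaling sequence for a pointed metric space `(X, d, p)`. -/
def NormalScaling {X : Type*} [MetricSpace X] (p : X) (r : ℕ → ℝ) : Prop :=
  ScalingSeq r ∧ EvDecr r ∧
    ∃ x : ℕ → X, Tendsto (fun n => dist (x n) p / r n) atTop (𝓝 (1 : ℝ))

/-- The set `Ẽ₀ᵈ(E)` of eventually decreasing sequences of nonzero points of `E`
tending to zero. -/
def E0d (E : Set ℝ) : Set (ℕ → ℝ) :=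
  {τ | EvDecr τ ∧ (∀ n, τ n ∈ E \ {0}) ∧ Tendsto τ atTop (𝓝 (0 : ℝ))}

/-- `Ioo a b` is a connected component of the interior of `[0,∞) \ E`. -/
def IsCompExt (E : Set ℝ) (a b : ℝ) : Prop :=
  a < b ∧ Ioo a b ⊆ interior (Ici 0 \ E) ∧
    ∀ a' b' : ℝ, a' ≤ a → b ≤ b' → Ioo a' b' ⊆ interior (Ici 0 \ E) → a' = a ∧ b' = b

/-- The set `Ĩ_E^d` of sequences of intervals. -/
def IEd (E : Set ℝ) (a b : ℕ → ℝ) : Prop :=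
  (∀ n, IsCompExt E (a n) (b n)) ∧ EvDecr a ∧ Tendsto a atTop (𝓝 (0 : ℝ)) ∧
    Tendsto (fun n => (b n - a n) / b n) atTop (𝓝 (1 : ℝ))

/-- The equivalence `x ≍ y` for sequences of strictly positive numbers. -/
def Asymp (x y : ℕ → ℝ) : Prop :=
  ∃ c₁ c₂ : ℝ, 0 < c₁ ∧ 0 < c₂ ∧ ∀ n, c₁ * x n < y n ∧ y n < c₂ * x n

/-- `E` is `τ`-strongly porous at `0`. -/
def TPorous (E : Set ℝ) (τ : ℕ → ℝ) : Prop :=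
  ∃ a b : ℕ → ℝ, IEd E a b ∧ Asymp τ a

/-- `E` is completely strongly porous at `0`. -/
def CSP (E : Set ℝ) : Prop := ∀ τ ∈ E0d E, TPorous E τ

/-- The relation `⪯` (on the first components of members of `Ĩ_E^d`). -/
def Preceq (a l : ℕ → ℝ) : Prop :=
  ∃ (N₁ : ℕ) (f : ℕ → ℕ), ∀ n ≥ N₁, a n = l (f n)

/-- `(l, m)` is a universal element of `Ĩ_E^d`. -/
def UnivElem (E : Set ℝ) (l m : ℕ → ℝ) : Prop :=
  IEd E l m ∧ ∀ a b : ℕ → ℝ, IEd E a b → Preceq a l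

/-- The quantity `M(L̃) = limsup lₙ / m_{n+1}`, valued in `[0,∞]`. -/
noncomputable def MQ (l m : ℕ → ℝ) : ℝ≥0∞ :=
  Filter.limsup (fun n => ENNReal.ofReal (l n / m (n + 1))) atTop

/-- The quantity `C(τ̃)`, valued in `[0,∞]` (inf of the empty set is `∞`). -/
noncomputable def Ctau (E : Set ℝ) (τ : ℕ → ℝ) : ℝ≥0∞ :=
  sInf {v | ∃ a b : ℕ → ℝ, IEd E a b ∧ (∀ᶠ n in atTop, τ n ≤ a n) ∧
    v = Filter.limsup (fun n => ENNReal.ofReal (a n / τ n)) atTop}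

/-- The quantity `C_E`, valued in `[0,∞]`. -/
noncomputable def CE (E : Set ℝ) : ℝ≥0∞ :=
  sSup {v | ∃ τ ∈ E0d E, v = Ctau E τ}

/-- The distance set `S_p(X) = {d(x,p) : x ∈ X}`. -/
def SpSet (X : Type*) [MetricSpace X] (p : X) : Set ℝ := {t | ∃ x : X, t = dist x p}

/-- `R*_n(X,p)`: the supremum, over normal scaling sequences `r` and sequences `x` in `X`
for which the finite limit `lim d(xₙ,p)/rₙ` exists, of this limit, in `[0,∞]`
(sup of the empty set is `0`). -/
noncomputable def RstarN (X : Type*) [MetricSpace X] (p : X) : ℝ≥0∞ :=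
  sSup {v | ∃ (r : ℕ → ℝ) (x : ℕ → X) (L : ℝ), NormalScaling p r ∧
    Tendsto (fun n => dist (x n) p / r n) atTop (𝓝 L) ∧ v = ENNReal.ofReal L}

/-- `Rⁿ_*(X,p)`: the corresponding infimum over strictly positive such limits, in `[0,∞]`
(inf of the empty set is `∞`). -/
noncomputable def RlowN (X : Type*) [MetricSpace X] (p : X) : ℝ≥0∞ :=
  sInf {v | ∃ (r : ℕ → ℝ) (x : ℕ → X) (L : ℝ), NormalScaling p r ∧
    Tendsto (fun n => dist (x n) p / r n) atTop (𝓝 L) ∧ 0 < L ∧ v = ENNReal.ofReal L}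

/-- `λ(E,0,h)`: the length of the largest open subinterval of `(0,h)` containing
no point of `E`. -/
noncomputable def lamE (E : Set ℝ) (h : ℝ) : ℝ :=
  sSup {d | ∃ a b : ℝ, 0 ≤ a ∧ a ≤ b ∧ b ≤ h ∧ Ioo a b ∩ E = ∅ ∧ d = b - a}

/-- `E` is strongly porous at `0`: the right upper porosity `p⁺(E,0)` equals `1`. -/
def StronglyPorousAtZero (E : Set ℝ) : Prop :=
  Filter.limsup (fun h => lamE E h / h) (𝓝[>] (0 : ℝ)) = 1


/-! The inequality `R*ₙ ≤ C_E` holds because a normal scaling sequence can be replaced by a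
decreasing subsequence of its witnessing points, which lies in `Ẽ₀ᵈ(E)`; a point `e ∈ E` at
scaled distance `L` cannot sit inside an asymptotically huge gap `(aₙ, bₙ)`, so it lies below
`aₙ`, forcing `limsup aₙ/τₙ ≥ L`.
Conversely, if `R*ₙ < c`, compactness of `[c, T]` shows that eventually `E` misses
`(c τₙ, T τₙ)` for every `T`; the component of `[0, ∞) \ E` containing `(c τₙ, (c + 1) τₙ)` then
has left end in `[τₙ, c τₙ]` and right end `≫ τₙ`, so `C(τ) ≤ c`. -/

theorem exists_strictMono_antitone_comp {α : Type*} [LinearOrder α] [TopologicalSpace α]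
    [OrderTopology α] {u : ℕ → α} {a : α} (hu : Tendsto u atTop (𝓝 a))
    (hgt : ∀ᶠ n in atTop, a < u n) :
    ∃ φ : ℕ → ℕ, StrictMono φ ∧ (∀ k, a < u (φ k)) ∧ Antitone (u ∘ φ) := by
  obtain ⟨N, hN⟩ := eventually_atTop.1 hgt
  obtain ⟨g, hinc | hnoninc⟩ :=
    exists_increasing_or_nonincreasing_subseq (· < ·) (fun n => u (n + N))
  · exfalso
    have hlim : Tendsto (fun k => u (g k + N)) atTop (𝓝 a) :=
      hu.comp ((tendsto_add_atTop_nat N).comp g.strictMono.tendsto_atTop)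
    obtain ⟨k, hk, hk0⟩ := ((hlim.eventually (gt_mem_nhds (hN (g 0 + N) le_add_self))).and
      (eventually_gt_atTop 0)).exists
    exact (hinc 0 k hk0).not_gt hk
  · refine ⟨fun k => g k + N, fun m n hmn => by simpa using g.strictMono hmn,
      fun k => hN _ le_add_self, antitone_nat_of_succ_le fun n => ?_⟩
    exact not_lt.1 (hnoninc n (n + 1) (Nat.lt_succ_self n))

theorem tendsto_sub_div_iff_tendsto_div {a b : ℕ → ℝ} (hb : ∀ᶠ n in atTop, b n ≠ 0) :
    Tendsto (fun n => (b n - a n) / b n) atTop (𝓝 1) ↔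
      Tendsto (fun n => a n / b n) atTop (𝓝 0) := by
  have hEq : (fun n => 1 - a n / b n) =ᶠ[atTop] fun n => (b n - a n) / b n :=
    hb.mono fun n hn => by field_simp
  rw [← tendsto_congr' hEq]
  constructor <;> intro h <;> simpa using (tendsto_const_nhds (x := (1 : ℝ))).sub h

theorem EvDecr.congr {a a' : ℕ → ℝ} (ha : EvDecr a) (h : a' =ᶠ[atTop] a) : EvDecr a' := by
  filter_upwards [ha, h, (tendsto_add_atTop_nat 1).eventually h] with n hn h₁ h₂
  rwa [h₁, h₂]

theorem EvDecr.comp_strictMono {τ : ℕ → ℝ} (h : EvDecr τ) {φ : ℕ → ℕ} (hφ : StrictMono φ) :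
    EvDecr (τ ∘ φ) := by
  obtain ⟨N, hN⟩ := eventually_atTop.1 h
  filter_upwards [eventually_ge_atTop N] with k hk
  exact Nat.rel_of_forall_rel_succ_of_le_of_le (· ≥ ·) hN (hk.trans hφ.le_apply)
    (hφ.monotone k.le_succ)

theorem IsCompExt.disjoint {E : Set ℝ} {a b : ℝ} (h : IsCompExt E a b) :
    Disjoint (Ioo a b) E :=
  Set.disjoint_left.2 fun _ hx hxE => (interior_subset (h.2.1 hx)).2 hxE

theorem IEd.tendsto_div {E : Set ℝ} {a b : ℕ → ℝ} (h : IEd E a b) :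
    Tendsto (fun n => a n / b n) atTop (𝓝 0) := by
  have hb : ∀ᶠ n in atTop, b n ≠ 0 := by
    filter_upwards [h.2.2.2.eventually (eventually_ne_nhds one_ne_zero)] with n hn hb
    simp [hb] at hn
  exact (tendsto_sub_div_iff_tendsto_div hb).1 h.2.2.2

theorem isCompExt_sSup_sInf {E : Set ℝ} {u v : ℝ} (huv : u < v) (hgap : Disjoint (Ioo u v) E)
    (hlo : (E ∩ Icc 0 u).Nonempty) (hhi : (E ∩ Ici v).Nonempty) :
    IsCompExt E (sSup (E ∩ Icc 0 u)) (sInf (E ∩ Ici v)) := by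
  have hlo_bdd : BddAbove (E ∩ Icc 0 u) := ⟨u, fun x hx => hx.2.2⟩
  have hhi_bdd : BddBelow (E ∩ Ici v) := ⟨v, fun x hx => hx.2⟩
  have ha_le : sSup (E ∩ Icc 0 u) ≤ u := csSup_le hlo fun x hx => hx.2.2
  have hle_b : v ≤ sInf (E ∩ Ici v) := le_csInf hhi fun x hx => hx.2
  have ha_nonneg : 0 ≤ sSup (E ∩ Icc 0 u) :=
    hlo.elim fun x hx => hx.2.1.trans (le_csSup hlo_bdd hx)
  have hdisj : Disjoint (Ioo (sSup (E ∩ Icc 0 u)) (sInf (E ∩ Ici v))) E := by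
    refine Set.disjoint_left.2 fun x ⟨hax, hxb⟩ hxE => ?_
    rcases le_or_gt x u with hxu | hux
    · exact hax.not_ge (le_csSup hlo_bdd ⟨hxE, ha_nonneg.trans hax.le, hxu⟩)
    rcases lt_or_ge x v with hxv | hvx
    · exact Set.disjoint_left.1 hgap ⟨hux, hxv⟩ hxE
    · exact hxb.not_ge (csInf_le hhi_bdd ⟨hxE, hvx⟩)
  refine ⟨ha_le.trans_lt (huv.trans_le hle_b), ?_, fun a' b' ha' hb' hsub => ⟨?_, ?_⟩⟩
  · refine interior_maximal (fun x hx => ⟨ha_nonneg.trans hx.1.le, fun hxE => ?_⟩) isOpen_Ioo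
    exact Set.disjoint_left.1 hdisj hx hxE
  · by_contra hne
    obtain ⟨x, hx, hax⟩ := exists_lt_of_lt_csSup hlo (ha'.lt_of_ne hne)
    have hxb' : x < b' := (le_csSup hlo_bdd hx).trans_lt
      ((ha_le.trans_lt (huv.trans_le hle_b)).trans_le hb')
    exact (interior_subset (hsub ⟨hax, hxb'⟩)).2 hx.1
  · by_contra hne
    obtain ⟨x, hx, hxb⟩ := exists_lt_of_csInf_lt hhi (hb'.lt_of_ne' hne)
    have hax : a' < x := ha'.trans_lt ((ha_le.trans_lt (huv.trans_le hle_b)).trans_le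
      (csInf_le hhi_bdd hx))
    exact (interior_subset (hsub ⟨hax, hxb⟩)).2 hx.1

theorem tendsto_div_of_le_mul_of_tendsto_atTop {a b τ : ℕ → ℝ} {c : ℝ}
    (ha_nonneg : ∀ n, 0 ≤ a n) (ha : ∀ n, a n ≤ c * τ n) (hτ : ∀ n, 0 < τ n)
    (hb : Tendsto (fun n => b n / τ n) atTop atTop) :
    Tendsto (fun n => a n / b n) atTop (𝓝 0) := by
  have hupper : Tendsto (fun n => c * (b n / τ n)⁻¹) atTop (𝓝 0) := by
    simpa using (tendsto_inv_atTop_zero.comp hb).const_mul c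
  refine tendsto_of_tendsto_of_tendsto_of_le_of_le' tendsto_const_nhds hupper ?_ ?_ <;>
    filter_upwards [hb.eventually_gt_atTop 0] with n hn <;>
    have hbn : 0 < b n := (div_pos_iff_of_pos_right (hτ n)).1 hn
  · exact div_nonneg (ha_nonneg n) hbn.le
  · calc a n / b n ≤ c * τ n / b n := by gcongr; exact ha n
      _ = c * (b n / τ n)⁻¹ := by rw [inv_div, mul_div_assoc]

theorem exists_IEd_eventuallyEq {E : Set ℝ} {a b : ℕ → ℝ}
    (hcomp : ∀ᶠ n in atTop, IsCompExt E (a n) (b n)) (hdecr : EvDecr a)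
    (ha : Tendsto a atTop (𝓝 0)) (hab : Tendsto (fun n => (b n - a n) / b n) atTop (𝓝 1)) :
    ∃ a' b' : ℕ → ℝ, IEd E a' b' ∧ a' =ᶠ[atTop] a := by
  obtain ⟨N, hN⟩ := eventually_atTop.1 hcomp
  have hshift : ∀ f : ℕ → ℝ, (fun n => f (max n N)) =ᶠ[atTop] f :=
    fun f => (eventually_ge_atTop N).mono fun n hn => by simp only [max_eq_left hn]
  refine ⟨fun n => a (max n N), fun n => b (max n N),
    ⟨fun n => hN _ (le_max_right n N), hdecr.congr (hshift a),
      ha.congr' (hshift a).symm, hab.congr' ?_⟩, hshift a⟩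
  filter_upwards [hshift a, hshift b] with n h₁ h₂
  rw [h₁, h₂]

section PointedAtZero

variable {E : Set ℝ}

theorem pos_of_mem_E0d (hE : E ⊆ Ici 0) {τ : ℕ → ℝ} (hτ : τ ∈ E0d E) (n : ℕ) : 0 < τ n :=
  (hE (hτ.2.1 n).1).lt_of_ne' (hτ.2.1 n).2

theorem comp_mem_E0d {τ : ℕ → ℝ} (hτ : τ ∈ E0d E) {φ : ℕ → ℕ} (hφ : StrictMono φ) :
    τ ∘ φ ∈ E0d E :=
  ⟨hτ.1.comp_strictMono hφ, fun k => hτ.2.1 (φ k), hτ.2.2.comp hφ.tendsto_atTop⟩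

variable (hE : E ⊆ Ici 0) (h0 : (0 : ℝ) ∈ E)
include hE

theorem dist_zero_eq_coe (x : E) : dist x (⟨0, h0⟩ : E) = x := by
  rw [Subtype.dist_eq, Real.dist_eq, sub_zero, abs_of_nonneg (hE x.2)]

theorem normalScaling_of_mem_E0d {τ : ℕ → ℝ} (hτ : τ ∈ E0d E) :
    NormalScaling (⟨0, h0⟩ : E) τ :=
  ⟨⟨pos_of_mem_E0d hE hτ, hτ.2.2⟩, hτ.1, fun n => ⟨τ n, (hτ.2.1 n).1⟩,
    tendsto_const_nhds.congr fun n => by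
      rw [dist_zero_eq_coe hE h0, div_self (pos_of_mem_E0d hE hτ n).ne']⟩

theorem ofReal_le_RstarN {τ : ℕ → ℝ} (hτ : τ ∈ E0d E) {e : ℕ → ℝ} (he : ∀ n, e n ∈ E) {L : ℝ}
    (hlim : Tendsto (fun n => e n / τ n) atTop (𝓝 L)) :
    ENNReal.ofReal L ≤ RstarN E (⟨0, h0⟩ : E) :=
  le_sSup ⟨τ, fun n => ⟨e n, he n⟩, L, normalScaling_of_mem_E0d hE h0 hτ,
    hlim.congr fun n => by rw [dist_zero_eq_coe hE h0], rfl⟩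

theorem ofReal_le_Ctau {τ : ℕ → ℝ} (hτ : τ ∈ E0d E) {e : ℕ → ℝ} (he : ∀ n, e n ∈ E) {L : ℝ}
    (hlim : Tendsto (fun n => e n / τ n) atTop (𝓝 L)) : ENNReal.ofReal L ≤ Ctau E τ := by
  refine le_sInf ?_
  rintro _ ⟨a, b, hab, hτa, rfl⟩
  set K := max L 0 + 1
  have hK : 0 < K := by positivity
  have he_le : ∀ᶠ n in atTop, e n / τ n ≤ a n / τ n := by
    filter_upwards [hτa, hlim.eventually (gt_mem_nhds (by grind : L < K)),
      hab.tendsto_div.eventually (gt_mem_nhds (inv_pos.2 hK))] with n hτan heK habK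
    have hτn := pos_of_mem_E0d hE hτ n
    have hbn : 0 < b n := hτn.trans_le (hτan.trans (hab.1 n).1.le)
    gcongr
    by_contra! hae
    have heb : e n < b n := calc
      e n < K * τ n := (div_lt_iff₀ hτn).1 heK
      _ ≤ K * a n := by gcongr
      _ < b n := by rwa [div_lt_iff₀ hbn, inv_mul_eq_div, lt_div_iff₀' hK] at habK
    exact Set.disjoint_left.1 (hab.1 n).disjoint ⟨hae, heb⟩ (he n)
  calc ENNReal.ofReal L = limsup (fun n => ENNReal.ofReal (e n / τ n)) atTop :=
        ((ENNReal.tendsto_ofReal hlim).limsup_eq).symm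
    _ ≤ _ := limsup_le_limsup (he_le.mono fun n hn => ENNReal.ofReal_le_ofReal hn)

theorem RstarN_le_CE : RstarN E (⟨0, h0⟩ : E) ≤ CE E := by
  refine sSup_le ?_
  rintro _ ⟨r, y, L, ⟨⟨hr_pos, hr0⟩, -, x, hx⟩, hy, rfl⟩
  simp only [dist_zero_eq_coe hE h0] at hx hy
  have hx0 : Tendsto (fun n => (x n : ℝ)) atTop (𝓝 0) := by
    simpa using (hx.mul hr0).congr fun n => div_mul_cancel₀ _ (hr_pos n).ne'
  have hx_pos : ∀ᶠ n in atTop, 0 < (x n : ℝ) :=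
    (hx.eventually (lt_mem_nhds zero_lt_one)).mono fun n hn =>
      (div_pos_iff_of_pos_right (hr_pos n)).1 hn
  obtain ⟨φ, hφ, hφ_pos, hφ_anti⟩ := exists_strictMono_antitone_comp hx0 hx_pos
  set τ : ℕ → ℝ := fun k => x (φ k)
  have hτ : τ ∈ E0d E := ⟨Eventually.of_forall fun k => hφ_anti k.le_succ,
    fun k => ⟨(x (φ k)).2, (hφ_pos k).ne'⟩, hx0.comp hφ.tendsto_atTop⟩
  have hlim : Tendsto (fun k => (y (φ k) : ℝ) / τ k) atTop (𝓝 L) := by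
    simpa using ((hy.comp hφ.tendsto_atTop).div (hx.comp hφ.tendsto_atTop) one_ne_zero).congr
      fun k => div_div_div_cancel_right₀ (hr_pos (φ k)).ne' _ _
  exact (ofReal_le_Ctau hE hτ (fun k => (y (φ k)).2) hlim).trans (le_sSup ⟨τ, hτ, rfl⟩)

theorem eventually_disjoint_Ioo_of_RstarN_lt {τ : ℕ → ℝ} (hτ : τ ∈ E0d E) {c T : ℝ}
    (hc : RstarN E (⟨0, h0⟩ : E) < ENNReal.ofReal c) :
    ∀ᶠ n in atTop, Disjoint (Ioo (c * τ n) (T * τ n)) E := by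
  by_contra hcon
  obtain ⟨φ, hφ, hφE⟩ := extraction_of_frequently_atTop (not_eventually.1 hcon)
  choose e he hEe using fun k => Set.not_disjoint_iff.1 (hφE k)
  have hmem : ∀ k, e k / τ (φ k) ∈ Icc c T := fun k =>
    ⟨(le_div_iff₀ (pos_of_mem_E0d hE hτ _)).2 (he k).1.le,
      (div_le_iff₀ (pos_of_mem_E0d hE hτ _)).2 (he k).2.le⟩
  obtain ⟨L, hL, ψ, hψ, hlim⟩ := isCompact_Icc.tendsto_subseq hmem
  have hle := ofReal_le_RstarN hE h0 (comp_mem_E0d hτ (hφ.comp hψ)) (fun k => hEe (ψ k)) hlim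
  exact (hc.trans_le (ENNReal.ofReal_le_ofReal hL.1)).not_ge hle

theorem exists_IEd_le_mul {τ : ℕ → ℝ} (hτ : τ ∈ E0d E) {c : ℝ} (hc1 : 1 ≤ c)
    (hc : RstarN E (⟨0, h0⟩ : E) < ENNReal.ofReal c) :
    ∃ a b : ℕ → ℝ, IEd E a b ∧ ∀ᶠ n in atTop, τ n ≤ a n ∧ a n ≤ c * τ n := by
  have hτ_pos := pos_of_mem_E0d hE hτ
  set a : ℕ → ℝ := fun n => sSup (E ∩ Icc 0 (c * τ n))
  set b : ℕ → ℝ := fun n => sInf (E ∩ Ici ((c + 1) * τ n))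
  have hτ_mem : ∀ n, τ n ∈ E ∩ Icc 0 (c * τ n) := fun n =>
    ⟨(hτ.2.1 n).1, (hτ_pos n).le, le_mul_of_one_le_left (hτ_pos n).le hc1⟩
  have hbdd : ∀ n, BddAbove (E ∩ Icc 0 (c * τ n)) := fun n => ⟨c * τ n, fun x hx => hx.2.2⟩
  have hτ_le_a : ∀ n, τ n ≤ a n := fun n => le_csSup (hbdd n) (hτ_mem n)
  have ha_le : ∀ n, a n ≤ c * τ n := fun n => csSup_le ⟨_, hτ_mem n⟩ fun x hx => hx.2.2
  have hhi : ∀ᶠ n in atTop, (E ∩ Ici ((c + 1) * τ n)).Nonempty := by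
    have h := (by simpa using hτ.2.2.const_mul (c + 1) :
      Tendsto (fun n => (c + 1) * τ n) atTop (𝓝 0))
    exact (h.eventually_le_const (hτ_pos 0)).mono fun n hn => ⟨τ 0, (hτ.2.1 0).1, hn⟩
  have hcomp : ∀ᶠ n in atTop, IsCompExt E (a n) (b n) := by
    filter_upwards [eventually_disjoint_Ioo_of_RstarN_lt hE h0 hτ hc, hhi] with n hgap hne
    exact isCompExt_sSup_sInf (by linarith [hτ_pos n]) hgap ⟨_, hτ_mem n⟩ hne
  have hb_large : ∀ T, ∀ᶠ n in atTop, T * τ n ≤ b n := fun T => by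
    filter_upwards [eventually_disjoint_Ioo_of_RstarN_lt hE h0 hτ hc, hhi] with n hgap hne
    refine le_csInf hne fun x hx => not_lt.1 fun hxT => Set.disjoint_left.1 hgap ⟨?_, hxT⟩ hx.1
    linarith [mem_Ici.1 hx.2, hτ_pos n]
  have hdecr : EvDecr a := hτ.1.mono fun n hn => csSup_le_csSup (hbdd n) ⟨_, hτ_mem (n + 1)⟩
    (inter_subset_inter_right _ (Icc_subset_Icc_right (by gcongr)))
  have ha0 : Tendsto a atTop (𝓝 0) := tendsto_of_tendsto_of_tendsto_of_le_of_le hτ.2.2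
    (by simpa using hτ.2.2.const_mul c) hτ_le_a ha_le
  have hb_div : Tendsto (fun n => b n / τ n) atTop atTop :=
    tendsto_atTop.2 fun T => (hb_large T).mono fun n hn => (le_div_iff₀ (hτ_pos n)).2 hn
  have hab := tendsto_div_of_le_mul_of_tendsto_atTop
    (fun n => (hτ_pos n).le.trans (hτ_le_a n)) ha_le hτ_pos hb_div
  have hb_ne : ∀ᶠ n in atTop, b n ≠ 0 :=
    (hb_large 1).mono fun n hn => (by linarith [hτ_pos n] : 0 < b n).ne'
  obtain ⟨a', b', hIEd, ha'⟩ :=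
    exists_IEd_eventuallyEq hcomp hdecr ha0 ((tendsto_sub_div_iff_tendsto_div hb_ne).2 hab)
  exact ⟨a', b', hIEd, ha'.mono fun n hn => hn ▸ ⟨hτ_le_a n, ha_le n⟩⟩

theorem Ctau_le_RstarN {τ : ℕ → ℝ} (hτ : τ ∈ E0d E) : Ctau E τ ≤ RstarN E (⟨0, h0⟩ : E) := by
  have h1 : 1 ≤ RstarN E (⟨0, h0⟩ : E) := by
    simpa using ofReal_le_RstarN hE h0 hτ (fun n => (hτ.2.1 n).1)
      (tendsto_const_nhds.congr fun n => (div_self (pos_of_mem_E0d hE hτ n).ne').symm)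
  refine le_of_forall_gt_imp_ge_of_dense fun c hc => ?_
  rcases eq_or_ne c ⊤ with rfl | hc_top
  · exact le_top
  rw [← ENNReal.ofReal_toReal hc_top] at hc ⊢
  have hc1 : 1 ≤ c.toReal := (ENNReal.one_lt_ofReal.1 (h1.trans_lt hc)).le
  obtain ⟨a, b, hab, hτa⟩ := exists_IEd_le_mul hE h0 hτ hc1 hc
  calc Ctau E τ ≤ limsup (fun n => ENNReal.ofReal (a n / τ n)) atTop :=
        sInf_le ⟨a, b, hab, hτa.mono fun n hn => hn.1, rfl⟩
    _ ≤ ENNReal.ofReal c.toReal := limsup_le_of_le (by isBoundedDefault) <| hτa.mono fun n hn =>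
        ENNReal.ofReal_le_ofReal ((div_le_iff₀ (pos_of_mem_E0d hE hτ n)).2 hn.2)

end PointedAtZero

theorem stmt_12_general (E : Set ℝ) (hE : E ⊆ Ici 0) (h0 : (0 : ℝ) ∈ E) :
    CE E = RstarN E (⟨0, h0⟩ : E) :=
  le_antisymm (sSup_le fun _ ⟨_, hτ, hv⟩ => hv ▸ Ctau_le_RstarN hE h0 hτ) (RstarN_le_CE hE h0)

/-- If `0 ∈ E` is an accumulation point of `E ⊆ [0,∞)`, then
`C_E = R*_n(E,0)` as elements of `[0,∞]`. -/
theorem stmt_12 (E : Set ℝ) (hE : E ⊆ Ici 0) (h0 : (0 : ℝ) ∈ E)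
    (hacc : AccPt (0 : ℝ) (Filter.principal E)) :
    CE E = RstarN E (⟨0, h0⟩ : E) :=
  stmt_12_general E hE h0
end

section
/- Let (X,d,p) be a pointed metric space and let E = S_p(X). Then R*_n(X,p) < ∞ (i.e., the family of pretangent spaces to X at p with normal scaling sequences is uniformly bounded) if and only if E is completely strongly porous at 0. Moreover, if R*_n(X,p) < ∞ and p is an accumulation point of X, then there exists a universal element L̃ of Ĩ_E^d with M(L̃) < ∞, and R*_n(X,p) = M(L̃) for every universal L̃ ∈ Ĩ_E^d. -/
/-!
Write `F` for the closure of `E = S_p(X)`. The values entering `R*_n(X,p)` are exactly the limits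
of ratios `σₙ / τₙ` of points of `F` along scales `τₙ → 0`, and by compactness, ratios trapped in
`[c, C]` at arbitrarily small scales produce such a limit in `[c, C]`.

If every ratio limit is at most `K`, then for small `τ` no point of `F` lies in
`[(K + 1) τ, C τ]`, so the last point of `F` below `(K + 1) τₙ` starts a gap of `F` of relative
length tending to infinity: `E` is completely strongly porous. Conversely, unbounded ratio limits
give a decreasing sequence `s₀ > t₀ > s₁ > t₁ > ⋯` in `E` whose ratios `sₖ / tₖ` return
infinitely often to every level; no sequence of thin gaps comparable to it can exist.

For `M(L̃)`: the left ends of the gaps at least `K + 1` times as long as their left end are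
`2`-separated, and listing them decreasingly gives a universal element. For any universal
`(l, m)`, a ratio limit `σ / τ` is trapped below some `lⱼ / m_{j+1}`, while a large jump
`lₙ / m_{n+1}` is matched by a point of `F` boundedly above `m_{n+1}`, since otherwise one more
thin gap, hence one more term of `l`, would sit between `m_{n+1}` and `lₙ`.
-/

open Filter Topology Set
open scoped ENNReal

lemma exists_seq_tendsto_zero {α : Type*} {f : α → ℝ} {P : α → Prop}
    (h : ∀ ε > 0, ∃ a, 0 < f a ∧ f a < ε ∧ P a) :
    ∃ a : ℕ → α, (∀ n, 0 < f (a n) ∧ P (a n)) ∧ Tendsto (fun n => f (a n)) atTop (𝓝 0) := by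
  choose a hpos hlt hP using fun n : ℕ => h (1 / (n + 1)) (by positivity)
  exact ⟨a, fun n => ⟨hpos n, hP n⟩, squeeze_zero (fun n => (hpos n).le) (fun n => (hlt n).le)
    tendsto_one_div_add_atTop_nhds_zero_nat⟩

lemma exists_strictAnti_subseq {u : ℕ → ℝ} (hpos : ∀ n, 0 < u n)
    (h0 : Tendsto u atTop (𝓝 0)) : ∃ φ : ℕ → ℕ, StrictMono φ ∧ StrictAnti (u ∘ φ) := by
  have hinv : Tendsto (fun n => (u n)⁻¹) atTop atTop :=
    tendsto_inv_nhdsGT_zero.comp (tendsto_nhdsWithin_iff.2 ⟨h0, Eventually.of_forall hpos⟩)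
  obtain ⟨φ, hφ, hmono⟩ := strictMono_subseq_of_tendsto_atTop hinv
  exact ⟨φ, hφ, fun i j hij => (inv_lt_inv₀ (hpos _) (hpos _)).1 (hmono hij)⟩

lemma exists_forall_lt_of_eventually_lt {u : ℕ → ℝ} {C : ℝ} (h : ∀ᶠ n in atTop, u n < C) :
    ∃ C', ∀ n, u n < C' := by
  obtain ⟨M, hM⟩ := (isBoundedUnder_of_eventually_le (h.mono fun _ => le_of_lt)).bddAbove_range
  exact ⟨M + 1, fun n => (hM ⟨n, rfl⟩).trans_lt (lt_add_one M)⟩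

lemma asymp_of_eventually {x y : ℕ → ℝ} (hx : ∀ n, 0 < x n) (hy : ∀ n, 0 < y n) {c₁ c₂ : ℝ}
    (hc₁ : 0 < c₁) (h : ∀ᶠ n in atTop, c₁ * x n < y n ∧ y n < c₂ * x n) : Asymp x y := by
  obtain ⟨C₁, hC₁⟩ := exists_forall_lt_of_eventually_lt (u := fun n => x n / y n)
    (h.mono fun n hn => (div_lt_iff₀ (hy n)).2 <| by
      rw [inv_mul_eq_div, lt_div_iff₀' hc₁]; exact hn.1)
  obtain ⟨C₂, hC₂⟩ := exists_forall_lt_of_eventually_lt (u := fun n => y n / x n)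
    (h.mono fun n hn => (div_lt_iff₀ (hx n)).2 hn.2)
  have hC₁pos : 0 < C₁ := (div_pos (hx 0) (hy 0)).trans (hC₁ 0)
  refine ⟨C₁⁻¹, C₂, inv_pos.2 hC₁pos, (div_pos (hy 0) (hx 0)).trans (hC₂ 0), fun n => ⟨?_, ?_⟩⟩
  · rw [inv_mul_eq_div, div_lt_iff₀ hC₁pos, mul_comm]
    exact (div_lt_iff₀ (hy n)).1 (hC₁ n)
  · exact (div_lt_iff₀ (hx n)).1 (hC₂ n)

lemma exists_le_and_succ_lt {u : ℕ → ℝ} {s : ℝ} {N : ℕ} (hN : s ≤ u N)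
    (h : ∃ n ≥ N, u n < s) : ∃ j ≥ N, s ≤ u j ∧ u (j + 1) < s := by
  by_contra! hstep
  obtain ⟨n, hn, hlt⟩ := h
  have : ∀ n ≥ N, s ≤ u n := fun n hn => by
    induction n, hn using Nat.le_induction with
    | base => exact hN
    | succ k hk ih => exact hstep k hk ih
  exact (this n hn).not_gt hlt

def RatioLimit (S : Set ℝ) (L : ℝ) : Prop :=
  ∃ τ σ : ℕ → ℝ, (∀ n, τ n ∈ S) ∧ (∀ n, σ n ∈ S) ∧ (∀ n, 0 < τ n) ∧
    Tendsto τ atTop (𝓝 0) ∧ Tendsto (fun n => σ n / τ n) atTop (𝓝 L)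

noncomputable def ratioSup (S : Set ℝ) : ℝ≥0∞ := ⨆ (L) (_ : RatioLimit S L), ENNReal.ofReal L

section RatioLimit

variable {S : Set ℝ} {L : ℝ}

lemma RatioLimit.ofReal_le_ratioSup (h : RatioLimit S L) : ENNReal.ofReal L ≤ ratioSup S :=
  le_iSup₂ (f := fun L (_ : RatioLimit S L) => ENNReal.ofReal L) L h

lemma RatioLimit.le_toReal_ratioSup (hS : ratioSup S ≠ ⊤) (h : RatioLimit S L) :
    L ≤ (ratioSup S).toReal :=
  ENNReal.ofReal_le_iff_le_toReal hS |>.1 h.ofReal_le_ratioSup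

lemma RatioLimit.of_closure (h : RatioLimit (closure S) L) : RatioLimit S L := by
  obtain ⟨τ, σ, hτ, hσ, hpos, hτ0, hlim⟩ := h
  have approx : ∀ u : ℕ → ℝ, (∀ n, u n ∈ closure S) → ∃ e : ℕ → ℝ, (∀ n, e n ∈ S) ∧
      (∀ n, |u n - e n| < τ n) ∧ Tendsto (fun n => dist (u n / τ n) (e n / τ n)) atTop (𝓝 0) := by
    intro u hu
    choose e he hd using fun n => Metric.mem_closure_iff.1 (hu n) (τ n / (n + 1))
      (div_pos (hpos n) n.cast_add_one_pos)
    refine ⟨e, he, fun n => (hd n).trans_le (div_le_self (hpos n).le (by simp)),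
      squeeze_zero (fun _ => dist_nonneg) (fun n => ?_) tendsto_one_div_add_atTop_nhds_zero_nat⟩
    rw [Real.dist_eq, ← sub_div, abs_div, abs_of_pos (hpos n), div_le_iff₀ (hpos n), one_div,
      inv_mul_eq_div, ← Real.dist_eq]
    exact (hd n).le
  obtain ⟨e, he, hclose, he1⟩ := approx τ hτ
  obtain ⟨e', he', -, he'L⟩ := approx σ hσ
  have he1 : Tendsto (fun n => e n / τ n) atTop (𝓝 1) :=
    tendsto_of_tendsto_of_dist (tendsto_const_nhds.congr fun n => (div_self (hpos n).ne').symm) he1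
  have hepos : ∀ n, 0 < e n := fun n => by linarith [(abs_sub_lt_iff.1 (hclose n)).1]
  refine ⟨e, e', he, he', hepos, ?_, ?_⟩
  · simpa using (he1.mul hτ0).congr fun n => div_mul_cancel₀ (e n) (hpos n).ne'
  · simpa using ((tendsto_of_tendsto_of_dist hlim he'L).div he1 one_ne_zero).congr
      fun n => div_div_div_cancel_right₀ (hpos n).ne' (e' n) (e n)

lemma ratioLimit_one (hacc : ∀ δ > 0, ∃ t ∈ S, 0 < t ∧ t < δ) : RatioLimit S 1 := by
  obtain ⟨τ, hτ, hτ0⟩ := exists_seq_tendsto_zero (f := id) fun δ hδ => by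
    obtain ⟨t, ht, h⟩ := hacc δ hδ; exact ⟨t, h.1, h.2, ht⟩
  exact ⟨τ, τ, fun n => (hτ n).2, fun n => (hτ n).2, fun n => (hτ n).1, hτ0,
    tendsto_const_nhds.congr fun n => (div_self (hτ n).1.ne').symm⟩

lemma exists_ratioLimit_mem_Icc {c C : ℝ}
    (h : ∀ ε > 0, ∃ t ∈ S, ∃ x ∈ S, 0 < t ∧ t < ε ∧ c * t ≤ x ∧ x ≤ C * t) :
    ∃ L ∈ Icc c C, RatioLimit S L := by
  obtain ⟨q, hq, hq0⟩ := exists_seq_tendsto_zero (f := Prod.fst)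
    (P := fun q : ℝ × ℝ => q.1 ∈ S ∧ q.2 ∈ S ∧ c * q.1 ≤ q.2 ∧ q.2 ≤ C * q.1) fun ε hε => by
      obtain ⟨t, ht, x, hx, h1, h2, h3⟩ := h ε hε
      exact ⟨(t, x), h1, h2, ht, hx, h3⟩
  have hbd : ∀ n, (q n).2 / (q n).1 ∈ Icc c C := fun n =>
    ⟨(le_div_iff₀ (hq n).1).2 (hq n).2.2.2.1, (div_le_iff₀ (hq n).1).2 (hq n).2.2.2.2⟩
  obtain ⟨L, hL, φ, hφ, hlim⟩ := tendsto_subseq_of_bounded (Metric.isBounded_Icc c C) hbd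
  rw [closure_Icc] at hL
  exact ⟨L, hL, fun n => (q (φ n)).1, fun n => (q (φ n)).2, fun n => (hq _).2.1,
    fun n => (hq _).2.2.1, fun n => (hq _).1, hq0.comp hφ.tendsto_atTop, hlim⟩

end RatioLimit

theorem rstarN_eq_ratioSup (X : Type*) [MetricSpace X] (p : X) :
    RstarN X p = ratioSup (SpSet X p) := by
  apply le_antisymm
  · refine sSup_le ?_
    rintro _ ⟨r, x, L, ⟨⟨hr, hr0⟩, -, w, hw⟩, hx, rfl⟩
    obtain ⟨N, hN⟩ := eventually_atTop.1 (hw.eventually_const_lt one_pos)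
    have hwpos : ∀ n ≥ N, 0 < dist (w n) p := fun n hn =>
      (div_pos_iff_of_pos_right (hr n)).1 (hN n hn)
    have hw0 : Tendsto (fun n => dist (w n) p) atTop (𝓝 0) := by
      simpa using (hw.mul hr0).congr fun n => div_mul_cancel₀ _ (hr n).ne'
    have hratio : Tendsto (fun n => dist (x n) p / dist (w n) p) atTop (𝓝 L) := by
      simpa using (hx.div hw one_ne_zero).congr fun n => div_div_div_cancel_right₀ (hr n).ne' _ _
    exact RatioLimit.ofReal_le_ratioSup ⟨fun n => dist (w (n + N)) p, fun n => dist (x (n + N)) p,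
      fun n => ⟨_, rfl⟩, fun n => ⟨_, rfl⟩, fun n => hwpos _ (Nat.le_add_left N n),
      (tendsto_add_atTop_iff_nat N).2 hw0, (tendsto_add_atTop_iff_nat N).2 hratio⟩
  · refine iSup₂_le fun L ⟨τ, σ, hτ, hσ, hpos, hτ0, hlim⟩ => le_sSup ?_
    obtain ⟨φ, hφ, hanti⟩ := exists_strictAnti_subseq hpos hτ0
    choose w hw using hτ
    choose x hx using hσ
    refine ⟨τ ∘ φ, x ∘ φ, L, ⟨⟨fun n => hpos _, hτ0.comp hφ.tendsto_atTop⟩,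
      Eventually.of_forall fun n => (hanti n.lt_succ_self).le, w ∘ φ, ?_⟩, ?_, rfl⟩
    · exact tendsto_const_nhds.congr fun n => by simp [← hw, div_self (hpos (φ n)).ne']
    · exact (hlim.comp hφ.tendsto_atTop).congr fun n => by simp [← hx]

structure IsGap (F : Set ℝ) (a b : ℝ) : Prop where
  left_mem : a ∈ F
  right_mem : b ∈ F
  lt : a < b
  le_or_le : ∀ x ∈ F, x ≤ a ∨ b ≤ x

namespace IsGap

variable {F : Set ℝ} {a b a' b' : ℝ}

lemma right_unique (h : IsGap F a b) (h' : IsGap F a b') : b = b' :=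
  le_antisymm ((h.le_or_le b' h'.right_mem).resolve_left h'.lt.not_ge)
    ((h'.le_or_le b h.right_mem).resolve_left h.lt.not_ge)

lemma right_le_of_lt (h : IsGap F a b) (h' : IsGap F a' b') (hlt : a < a') : b ≤ a' :=
  (h.le_or_le a' h'.left_mem).resolve_left hlt.not_ge

end IsGap

lemma exists_isGap {F : Set ℝ} (hF : IsClosed F) {a c v : ℝ} (ha : a ∈ F) (hv : v ∈ F)
    (hac : a < c) (hav : a < v) (hempty : ∀ x ∈ F, a < x → c < x) :
    ∃ b, IsGap F a b ∧ c < b ∧ b ≤ v := by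
  obtain ⟨b, ⟨hbF, hcb, hbv⟩, hleast⟩ :=
    (isCompact_Icc.inter_left hF).exists_isLeast ⟨v, hv, (hempty v hv hav).le, le_rfl⟩
  have hcb' : c < b := hempty b hbF (hac.trans_le hcb)
  refine ⟨b, ⟨ha, hbF, hac.trans hcb', fun x hx => or_iff_not_imp_left.2 fun hxa => ?_⟩, hcb', hbv⟩
  rcases le_or_gt x v with hxv | hxv
  · exact hleast ⟨hx, (hempty x hx (not_le.1 hxa)).le, hxv⟩
  · exact hbv.trans hxv.le

lemma exists_isGreatest_inter_Icc {F : Set ℝ} (hF : IsClosed F) (h0 : (0 : ℝ) ∈ F) {u : ℝ}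
    (hu : 0 ≤ u) : ∃ a, IsGreatest (F ∩ Icc 0 u) a :=
  (isCompact_Icc.inter_left hF).exists_isGreatest ⟨0, h0, le_rfl, hu⟩

/-- Otherwise the last point of `F` below `γ t` would start a gap reaching beyond `D γ t`. -/
lemma exists_mem_Icc_of_forall_isGap {F : Set ℝ} (hF : IsClosed F) (h0 : (0 : ℝ) ∈ F)
    {t v γ D : ℝ} (ht : t ∈ F) (hv : v ∈ F) (ht0 : 0 ≤ t) (hγ : 1 ≤ γ) (hD : 1 ≤ D)
    (hγt : γ * t < v) (hnogap : ∀ g b, IsGap F g b → t ≤ g → g < v → D * g ≤ b → False) :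
    ∃ x ∈ F, γ * t ≤ x ∧ x ≤ D * γ * t := by
  have hγt0 : 0 ≤ γ * t := mul_nonneg (zero_le_one.trans hγ) ht0
  have hγtD : γ * t ≤ D * γ * t := by rw [mul_assoc]; exact le_mul_of_one_le_left hγt0 hD
  by_contra! hnone
  obtain ⟨g, hg⟩ := exists_isGreatest_inter_Icc hF h0 hγt0
  have hgt : g < γ * t := hg.1.2.2.lt_of_ne fun hg' => (hnone g hg.1.1 hg'.ge).not_ge (hg' ▸ hγtD)
  have hempty : ∀ x ∈ F, g < x → D * γ * t < x := fun x hx hgx =>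
    hnone x hx (not_lt.1 fun hxt => hgx.not_ge (hg.2 ⟨hx, hg.1.2.1.trans hgx.le, hxt.le⟩))
  obtain ⟨b, hb, hDb, -⟩ := exists_isGap hF hg.1.1 hv (hgt.trans_le hγtD)
    (hg.1.2.2.trans_lt hγt) hempty
  refine hnogap g b hb (hg.2 ⟨ht, ht0, le_mul_of_one_le_left ht0 hγ⟩) (hg.1.2.2.trans_lt hγt) ?_
  calc D * g ≤ D * (γ * t) := by gcongr
    _ ≤ b := by rw [← mul_assoc]; exact hDb.le

section Components

variable {E : Set ℝ}

lemma closure_subset_Ici (hE : E ⊆ Ici 0) : closure E ⊆ Ici 0 :=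
  closure_minimal hE isClosed_Ici

lemma IsGap.left_pos {a b : ℝ} (h : IsGap (closure E) a b) (hE : E ⊆ Ici 0)
    (hacc : ∀ δ > 0, ∃ t ∈ E, 0 < t ∧ t < δ) : 0 < a := by
  obtain ⟨t, ht, htpos, htb⟩ := hacc b ((closure_subset_Ici hE h.left_mem).out.trans_lt h.lt)
  exact htpos.trans_le ((h.le_or_le t (subset_closure ht)).resolve_right htb.not_ge)

lemma isCompExt_iff_isGap (h0 : (0 : ℝ) ∈ E) (hE : E ⊆ Ici 0) {a b : ℝ} :
    IsCompExt E a b ↔ IsGap (closure E) a b := by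
  have hU : interior (Ici 0 \ E) = Ioi 0 \ closure E := by
    rw [sdiff_eq, sdiff_eq, interior_inter, interior_Ici, interior_compl]
  have hUopen : IsOpen (Ioi (0 : ℝ) \ closure E) := isOpen_Ioi.sdiff isClosed_closure
  simp only [IsCompExt, hU]
  constructor
  · rintro ⟨hab, hsub, hmax⟩
    have hmid : (a + b) / 2 ∈ Ioo a b := ⟨by linarith, by linarith⟩
    have ha0 : 0 ≤ a := by
      by_contra! ha
      have := (hsub (show a / 2 ∈ Ioo a b from ⟨by linarith, by linarith [(hsub hmid).1.out]⟩)).1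
      linarith [this.out]
    have hgap : ∀ x ∈ closure E, x ≤ a ∨ b ≤ x := fun x hx => by
      by_contra! h
      exact (hsub ⟨h.1, h.2⟩).2 hx
    have ha : a ∈ closure E := by
      by_contra ha
      obtain ⟨l, hla, hl⟩ := exists_Ioc_subset_of_mem_nhds
        (hUopen.mem_nhds ⟨ha0.lt_of_ne (by rintro rfl; exact ha (subset_closure h0)), ha⟩)
        ⟨a - 1, by linarith⟩
      have := (hmax l b hla.le le_rfl (Ioc_union_Ioo_eq_Ioo hla.le hab ▸ union_subset hl hsub)).1
      exact hla.ne this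
    have hb : b ∈ closure E := by
      by_contra hb
      obtain ⟨u, hbu, hu⟩ := exists_Ico_subset_of_mem_nhds
        (hUopen.mem_nhds ⟨(hsub hmid).1.out.trans hmid.2, hb⟩) ⟨b + 1, by linarith⟩
      have := (hmax a u le_rfl hbu.le (Ioo_union_Ico_eq_Ioo hab hbu.le ▸ union_subset hsub hu)).2
      exact hbu.ne' this
    exact ⟨ha, hb, hab, hgap⟩
  · rintro ⟨ha, hb, hab, hgap⟩
    refine ⟨hab, fun x hx => ⟨(closure_subset_Ici hE ha).out.trans_lt hx.1, fun hxE => ?_⟩,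
      fun a' b' ha' hb' hsub => ⟨?_, ?_⟩⟩
    · rcases hgap x hxE with h | h
      exacts [hx.1.not_ge h, hx.2.not_ge h]
    · by_contra hne
      exact (hsub ⟨lt_of_le_of_ne ha' hne, hab.trans_le hb'⟩).2 ha
    · by_contra hne
      exact (hsub ⟨ha'.trans_lt hab, lt_of_le_of_ne hb' (Ne.symm hne)⟩).2 hb

lemma iEd_iff (h0 : (0 : ℝ) ∈ E) (hE : E ⊆ Ici 0) {a b : ℕ → ℝ} :
    IEd E a b ↔ (∀ n, IsGap (closure E) (a n) (b n)) ∧ EvDecr a ∧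
      Tendsto a atTop (𝓝 0) ∧ Tendsto (fun n => a n / b n) atTop (𝓝 0) := by
  simp only [IEd, isCompExt_iff_isGap h0 hE]
  refine and_congr_right fun hgap => and_congr_right' <| and_congr_right' ?_
  have hb : ∀ n, b n ≠ 0 := fun n =>
    ((closure_subset_Ici hE (hgap n).left_mem).out.trans_lt (hgap n).lt).ne'
  simp only [sub_div, fun n => div_self (hb n)]
  constructor <;> intro h <;> simpa using tendsto_const_nhds (x := (1 : ℝ)) |>.sub h

end Components

lemma tendsto_div_nhds_zero_of_forall_eventually {a b : ℕ → ℝ} (ha : ∀ n, 0 ≤ a n)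
    (hb : ∀ n, 0 < b n) (h : ∀ R > 0, ∀ᶠ n in atTop, R * a n ≤ b n) :
    Tendsto (fun n => a n / b n) atTop (𝓝 0) := by
  refine tendsto_order.2 ⟨fun ε hε => Eventually.of_forall fun n =>
    hε.trans_le (div_nonneg (ha n) (hb n).le), fun ε hε => ?_⟩
  filter_upwards [h (2 / ε) (by positivity)] with n hn
  rw [div_lt_iff₀ (hb n)]
  rw [div_mul_eq_mul_div, div_le_iff₀ hε] at hn
  nlinarith [ha n, hb n]

section BoundedRatios

variable {E : Set ℝ} {K : ℝ}

lemma eventually_forall_notMem_Icc (hK : ∀ L, RatioLimit E L → L ≤ K) {c C : ℝ} (hc : K < c)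
    {τ : ℕ → ℝ} (hτF : ∀ n, τ n ∈ closure E) (hτ : ∀ n, 0 < τ n)
    (hτ0 : Tendsto τ atTop (𝓝 0)) :
    ∀ᶠ n in atTop, ∀ x ∈ closure E, x ∉ Icc (c * τ n) (C * τ n) := by
  by_contra h
  rw [not_eventually] at h
  obtain ⟨L, hL, hRL⟩ := exists_ratioLimit_mem_Icc (S := closure E) (c := c) (C := C)
    fun ε hε => by
      obtain ⟨n, hn, hnε⟩ := (h.and_eventually (hτ0.eventually_lt_const hε)).exists
      push Not at hn
      obtain ⟨x, hx, hxI⟩ := hn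
      exact ⟨τ n, hτF n, x, hx, hτ n, hnε, hxI⟩
  exact (hK L hRL.of_closure).not_gt (hc.trans_le hL.1)

lemma eventually_exists_isGap (hK : ∀ L, RatioLimit E L → L ≤ K) (hK0 : 0 ≤ K)
    {τ : ℕ → ℝ} (hτF : ∀ n, τ n ∈ closure E) (hτ : ∀ n, 0 < τ n)
    (hτ0 : Tendsto τ atTop (𝓝 0)) {a : ℕ → ℝ}
    (ha : ∀ n, IsGreatest (closure E ∩ Icc 0 ((K + 1) * τ n)) (a n)) {R : ℝ} (hR : 0 < R) :
    ∀ᶠ n in atTop, ∃ b, IsGap (closure E) (a n) b ∧ R * a n ≤ b := by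
  set C := (K + 1) * (R + 1)
  have hC : 0 < C := by positivity
  filter_upwards [eventually_forall_notMem_Icc hK (lt_add_one K) (C := C) hτF hτ hτ0,
    hτ0.eventually_lt_const (div_pos (hτ 0) hC)] with n hwindow hsmall
  have hKRτ : 0 < (K + 1) * R * τ n := by have := hτ n; positivity
  have hKC : (K + 1) * τ n < C * τ n := by simp only [C]; nlinarith
  have haK : a n ≤ (K + 1) * τ n := (ha n).1.2.2
  rw [lt_div_iff₀ hC, mul_comm] at hsmall
  obtain ⟨b, hb, hCb, -⟩ := exists_isGap isClosed_closure (ha n).1.1 (hτF 0)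
    (haK.trans_lt hKC) (haK.trans_lt (hKC.trans hsmall)) fun x hx hax => by
      by_contra! hxC
      by_cases hxK : x ≤ (K + 1) * τ n
      · exact hax.not_ge ((ha n).2 ⟨hx, (ha n).1.2.1.trans hax.le, hxK⟩)
      · exact hwindow x hx ⟨(not_le.1 hxK).le, hxC⟩
  refine ⟨b, hb, ?_⟩
  calc R * a n ≤ R * ((K + 1) * τ n) := by gcongr
    _ ≤ C * τ n := by simp only [C]; nlinarith
    _ ≤ b := hCb.le

theorem csp_of_ratioLimit_le (h0 : (0 : ℝ) ∈ E) (hE : E ⊆ Ici 0)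
    (hK : ∀ L, RatioLimit E L → L ≤ K) (hK0 : 0 ≤ K) : CSP E := by
  rintro τ ⟨hτdec, hτE, hτ0⟩
  have hτF : ∀ n, τ n ∈ closure E := fun n => subset_closure (hτE n).1
  have hτ : ∀ n, 0 < τ n := fun n => (hE (hτE n).1).out.lt_of_ne' (hτE n).2
  choose a ha using fun n => exists_isGreatest_inter_Icc isClosed_closure (subset_closure h0)
    (u := (K + 1) * τ n) (by have := hτ n; positivity)
  have hτa : ∀ n, τ n ≤ a n := fun n =>
    (ha n).2 ⟨hτF n, (hτ n).le, le_mul_of_one_le_left (hτ n).le (by linarith)⟩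
  have haτ : ∀ n, a n ≤ (K + 1) * τ n := fun n => (ha n).1.2.2
  have hgaps := fun R (hR : 0 < R) => eventually_exists_isGap hK hK0 hτF hτ hτ0 ha hR
  obtain ⟨N, hN⟩ := eventually_atTop.1 (hgaps 1 one_pos)
  choose b hb using fun n => hN (max n N) (le_max_right n N)
  have htail : ∀ᶠ n in atTop, max n N = n := (eventually_ge_atTop N).mono fun n => max_eq_left
  have ha0 : Tendsto a atTop (𝓝 0) := squeeze_zero (fun n => (hτ n).le.trans (hτa n)) haτ
    (by simpa using hτ0.const_mul (K + 1))
  refine ⟨fun n => a (max n N), b, (iEd_iff h0 hE).2 ⟨fun n => (hb n).1, ?_, ?_, ?_⟩, ?_⟩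
  · filter_upwards [htail, hτdec] with n hn hdec
    rw [hn, max_eq_left (by omega)]
    exact (ha n).2 ⟨(ha (n + 1)).1.1, (ha (n + 1)).1.2.1, (haτ (n + 1)).trans (by gcongr)⟩
  · exact ha0.congr' (htail.mono fun n hn => by simp only [hn])
  · refine tendsto_div_nhds_zero_of_forall_eventually (fun n => (hτ _).le.trans (hτa _))
      (fun n => (hτ _).trans_le ((hτa _).trans (hb n).1.lt.le)) fun R hR => ?_
    filter_upwards [htail, hgaps R hR] with n hn ⟨b', hgap, hRb⟩
    have hbn := (hb n).1
    rw [hn] at hbn ⊢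
    rwa [hbn.right_unique hgap]
  · refine asymp_of_eventually hτ (fun n => (hτ _).trans_le (hτa _)) (c₂ := K + 2) one_half_pos ?_
    filter_upwards [htail] with n hn
    simp only [hn]
    have := hτ n
    constructor <;> linarith [hτa n, haτ n]

end BoundedRatios

lemma RatioLimit.exists_pair {S : Set ℝ} {L : ℝ} (h : RatioLimit S L) {δ ε : ℝ} (hδ : 0 < δ)
    (hε : 0 < ε) : ∃ t ∈ S, ∃ s ∈ S, 0 < t ∧ t < δ ∧ L - ε < s / t ∧ s / t < L + ε := by
  obtain ⟨τ, σ, hτ, hσ, hpos, hτ0, hlim⟩ := h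
  obtain ⟨n, hn, h1, h2⟩ := ((hτ0.eventually_lt_const hδ).and
    ((hlim.eventually_const_lt (sub_lt_self L hε)).and
      (hlim.eventually_lt_const (lt_add_of_pos_right L hε)))).exists
  exact ⟨τ n, hτ n, σ n, hσ n, hpos n, hn, h1, h2⟩

section CSP

variable {E : Set ℝ}

lemma exists_pair_seq_of_unbounded (hunb : ∀ j : ℕ, ∃ L, (j : ℝ) + 2 ≤ L ∧ RatioLimit E L) :
    ∃ t s : ℕ → ℝ, (∀ k, t k ∈ E ∧ s k ∈ E) ∧ (∀ k, 0 < t k ∧ t k < s k) ∧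
      (∀ k, s (k + 1) < t k / 2) ∧
      ∀ j : ℕ, ∃ C, ∃ᶠ k in atTop, (j : ℝ) < s k / t k ∧ s k / t k < C := by
  choose L hL hRL using hunb
  -- the pair number `k` is taken at level `(Nat.unpair k).1`, so every level recurs
  have step : ∀ (k : ℕ) (x : ℝ), ∃ q : ℝ × ℝ, 0 < x → (q.1 ∈ E ∧ q.2 ∈ E ∧ 0 < q.1 ∧
      L k.unpair.1 - 1 < q.2 / q.1 ∧ q.2 / q.1 < L k.unpair.1 + 1) ∧ q.2 < x := by
    intro k x
    by_cases hx : 0 < x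
    · have hL0 : 0 < L k.unpair.1 + 1 := by
        linarith [hL k.unpair.1, k.unpair.1.cast_nonneg (α := ℝ)]
      obtain ⟨t, ht, s, hs, htpos, htx, h1, h2⟩ :=
        (hRL k.unpair.1).exists_pair (div_pos hx hL0) one_pos
      refine ⟨(t, s), fun _ => ⟨⟨ht, hs, htpos, h1, h2⟩, ?_⟩⟩
      rw [div_lt_iff₀ htpos] at h2
      rw [lt_div_iff₀ hL0] at htx
      linarith
    · exact ⟨0, fun h => absurd h hx⟩
  choose next hnext using step
  let q : ℕ → ℝ × ℝ := fun k => Nat.rec (next 0 1) (fun k q => next (k + 1) (q.1 / 2)) k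
  have hfst : ∀ k, 0 < (q k).1 := fun k => by
    induction k with
    | zero => exact (hnext 0 1 one_pos).1.2.2.1
    | succ k ih => exact (hnext (k + 1) _ (half_pos ih)).1.2.2.1
  have hspec : ∀ k, (q k).1 ∈ E ∧ (q k).2 ∈ E ∧ 0 < (q k).1 ∧
      L k.unpair.1 - 1 < (q k).2 / (q k).1 ∧ (q k).2 / (q k).1 < L k.unpair.1 + 1 := by
    rintro (_ | k)
    exacts [(hnext 0 1 one_pos).1, (hnext (k + 1) _ (half_pos (hfst k))).1]
  have hgt : ∀ k, 1 < (q k).2 / (q k).1 := fun k => by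
    linarith [(hspec k).2.2.2.1, hL k.unpair.1, k.unpair.1.cast_nonneg (α := ℝ)]
  refine ⟨fun k => (q k).1, fun k => (q k).2, fun k => ⟨(hspec k).1, (hspec k).2.1⟩,
    fun k => ⟨hfst k, (one_lt_div (hfst k)).1 (hgt k)⟩,
    fun k => (hnext (k + 1) _ (half_pos (hfst k))).2, fun j => ⟨L j + 1, ?_⟩⟩
  refine frequently_atTop.2 fun N => ⟨Nat.pair j N, Nat.right_le_pair j N, ?_, ?_⟩
  · have := (hspec (Nat.pair j N)).2.2.2.1
    rw [Nat.unpair_pair] at this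
    linarith [hL j]
  · simpa using (hspec (Nat.pair j N)).2.2.2.2

lemma exists_mem_E0d_interleave {t s : ℕ → ℝ} (hmem : ∀ k, t k ∈ E ∧ s k ∈ E)
    (hpos : ∀ k, 0 < t k ∧ t k < s k) (hlink : ∀ k, s (k + 1) < t k / 2) :
    ∃ σ ∈ E0d E, ∀ k, σ (2 * k + 1) = t k := by
  let σ : ℕ → ℝ := fun n => if Even n then s (n / 2) else t (n / 2)
  have hσs : ∀ k, σ (2 * k) = s k := fun k => by simp [σ]
  have hσt : ∀ k, σ (2 * k + 1) = t k := fun k => by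
    simp [σ, show (2 * k + 1) / 2 = k by omega]
  have hσ : ∀ n, σ n ∈ E ∧ 0 < σ n ∧ σ n ≤ s (n / 2) := fun n => by
    obtain ⟨k, rfl | rfl⟩ := Nat.even_or_odd' n
    · rw [hσs, show 2 * k / 2 = k by omega]
      exact ⟨(hmem k).2, (hpos k).1.trans (hpos k).2, le_rfl⟩
    · rw [hσt, show (2 * k + 1) / 2 = k by omega]
      exact ⟨(hmem k).1, (hpos k).1, (hpos k).2.le⟩
  have hanti : StrictAnti σ := strictAnti_nat_of_succ_lt fun n => by
    obtain ⟨k, rfl | rfl⟩ := Nat.even_or_odd' n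
    · rw [hσs, hσt]
      exact (hpos k).2
    · rw [show 2 * k + 1 + 1 = 2 * (k + 1) by ring, hσs, hσt]
      linarith [hlink k, (hpos k).1]
  have hs0 : Tendsto s atTop (𝓝 0) := by
    have hgeom : ∀ k, s k ≤ s 0 * (1 / 2) ^ k := fun k => by
      induction k with
      | zero => simp
      | succ k ih => rw [pow_succ]; nlinarith [hlink k, hpos k]
    refine squeeze_zero (fun k => ((hpos k).1.trans (hpos k).2).le) hgeom ?_
    simpa using (tendsto_pow_atTop_nhds_zero_of_lt_one (by norm_num)
      (by norm_num : (1 / 2 : ℝ) < 1)).const_mul (s 0)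
  refine ⟨σ, ⟨Eventually.of_forall fun n => (hanti n.lt_succ_self).le,
    fun n => ⟨(hσ n).1, (hσ n).2.1.ne'⟩, ?_⟩, hσt⟩
  exact squeeze_zero (fun n => (hσ n).2.1.le) (fun n => (hσ n).2.2)
    (hs0.comp (Nat.tendsto_div_const_atTop two_ne_zero))

/-- For gaps `(Aₙ, Bₙ)` with `c₁ σₙ < Aₙ < c₂ σₙ`, where `σ = (s₀, t₀, s₁, t₁, …)`, at the
recurring level `j ≥ c₂` the point `sₖ > c₂ tₖ` (or `tₖ` itself) lies beyond `B_{2k+1}`, which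
keeps `A_{2k+1} / B_{2k+1}` above `c₁ / C` infinitely often. -/
lemma not_csp_of_pair_seq (h0 : (0 : ℝ) ∈ E) (hE : E ⊆ Ici 0) {t s : ℕ → ℝ}
    (hmem : ∀ k, t k ∈ E ∧ s k ∈ E) (hpos : ∀ k, 0 < t k ∧ t k < s k)
    (hlink : ∀ k, s (k + 1) < t k / 2)
    (hlev : ∀ j : ℕ, ∃ C, ∃ᶠ k in atTop, (j : ℝ) < s k / t k ∧ s k / t k < C) : ¬ CSP E := by
  obtain ⟨σ, hσ, hσt⟩ := exists_mem_E0d_interleave hmem hpos hlink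
  intro hcsp
  obtain ⟨A, B, hI, c₁, c₂, hc₁, -, hAσ⟩ := hcsp σ hσ
  obtain ⟨hgap, -, -, hAB⟩ := (iEd_iff h0 hE).1 hI
  obtain ⟨j, hj⟩ := exists_nat_ge (max c₂ 1)
  obtain ⟨C, hC⟩ := hlev j
  obtain ⟨k₀, hk₀⟩ := hC.exists
  have hjk₀ : (j : ℝ) < C := hk₀.1.trans hk₀.2
  have hC1 : 1 ≤ C := by linarith [le_max_right c₂ 1]
  obtain ⟨N, hN⟩ := eventually_atTop.1 (hAB.eventually_lt_const (div_pos hc₁ (by linarith)))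
  obtain ⟨k, ⟨hjk, hkC⟩, hkN⟩ := (hC.and_eventually (eventually_ge_atTop N)).exists
  have hn := hN (2 * k + 1) (by omega)
  obtain ⟨hlo, hhi⟩ := hAσ (2 * k + 1)
  rw [hσt] at hlo hhi
  have htk := (hpos k).1
  have hBpos : 0 < B (2 * k + 1) := (mul_pos hc₁ htk).trans (hlo.trans (hgap _).lt)
  rw [div_lt_iff₀ hBpos] at hn
  refine hn.not_ge ?_
  rcases (hgap _).le_or_le (t k) (subset_closure (hmem k).1) with htA | hBt
  · have hsk : c₂ * t k < s k := by
      rw [lt_div_iff₀ htk] at hjk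
      nlinarith [le_max_left c₂ 1]
    have hBs : B (2 * k + 1) ≤ s k :=
      ((hgap _).le_or_le (s k) (subset_closure (hmem k).2)).resolve_left (by linarith)
    rw [div_lt_iff₀ htk] at hkC
    calc c₁ / C * B (2 * k + 1) ≤ c₁ / C * s k := by gcongr
      _ ≤ c₁ * t k := by
        rw [div_mul_eq_mul_div, div_le_iff₀ (by linarith)]
        nlinarith
      _ ≤ A (2 * k + 1) := hlo.le
  · calc c₁ / C * B (2 * k + 1) ≤ c₁ * B (2 * k + 1) := by gcongr; exact div_le_self hc₁.le hC1
      _ ≤ c₁ * t k := by gcongr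
      _ ≤ A (2 * k + 1) := hlo.le

theorem ratioSup_lt_top_of_csp (h0 : (0 : ℝ) ∈ E) (hE : E ⊆ Ici 0) (hcsp : CSP E) :
    ratioSup E < ⊤ := by
  by_contra htop
  rw [not_lt, top_le_iff] at htop
  obtain ⟨t, s, hmem, hpos, hlink, hlev⟩ := exists_pair_seq_of_unbounded (E := E) fun j => by
    have := htop ▸ ENNReal.ofReal_lt_top (r := (j : ℝ) + 2)
    obtain ⟨L, hL⟩ := lt_iSup_iff.1 this
    obtain ⟨hRL, hlt⟩ := lt_iSup_iff.1 hL
    exact ⟨L, (ENNReal.ofReal_lt_ofReal_iff'.1 hlt).1.le, hRL⟩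
  exact not_csp_of_pair_seq h0 hE hmem hpos hlink hlev hcsp

end CSP

section Accumulation

variable {E : Set ℝ} {l m : ℕ → ℝ}

/-- `σₖ / τₖ ≤ lⱼ / m_{j+1}` for the `j` with `l_{j+1} < σₖ ≤ lⱼ`, because the thin gap
`(l_{j+1}, m_{j+1})` cannot separate `τₖ` from `σₖ`. -/
lemma ofReal_le_MQ (h0 : (0 : ℝ) ∈ E) (hE : E ⊆ Ici 0) (hacc : ∀ δ > 0, ∃ t ∈ E, 0 < t ∧ t < δ)
    (hI : IEd E l m) {L : ℝ} (hL : RatioLimit E L) : ENNReal.ofReal L ≤ MQ l m := by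
  obtain ⟨hgap, -, hl0, hlm⟩ := (iEd_iff h0 hE).1 hI
  obtain ⟨τ, σ, hτ, hσ, hpos, hτ0, hlim⟩ := hL
  have hσ0 : Tendsto σ atTop (𝓝 0) := by
    simpa using (hlim.mul hτ0).congr fun n => div_mul_cancel₀ _ (hpos n).ne'
  by_contra! h
  obtain ⟨θ, hθ0, hMθ, hθL⟩ := ENNReal.lt_iff_exists_real_btwn.1 h
  obtain ⟨hθL, hL0⟩ := ENNReal.ofReal_lt_ofReal_iff'.1 hθL
  refine hMθ.not_ge (le_limsup_of_frequently_le (frequently_atTop.2 fun N => ?_)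
    (by isBoundedDefault))
  obtain ⟨T, hT⟩ :=
    eventually_atTop.1 (hlm.eventually_lt_const (inv_pos.2 (by linarith : 0 < L + 1)))
  have hlT : 0 < l (max N T) := (hgap _).left_pos hE hacc
  obtain ⟨k, ⟨hθk, hkL⟩, hσk⟩ := ((hlim.eventually_const_lt hθL).and
    (hlim.eventually_lt_const (lt_add_one L))).and (hσ0.eventually_lt_const hlT) |>.exists
  have hσpos : 0 < σ k := (div_pos_iff_of_pos_right (hpos k)).1 (hθ0.trans_lt hθk)
  obtain ⟨j, hj, hσl, hlσ⟩ := exists_le_and_succ_lt hσk.le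
    ((eventually_ge_atTop (max N T)).and (hl0.eventually_lt_const hσpos)).exists
  have hm : m (j + 1) ≤ τ k := by
    by_contra! hτm
    have hτl : τ k ≤ l (j + 1) :=
      ((hgap _).le_or_le (τ k) (subset_closure (hτ k))).resolve_right hτm.not_ge
    have hmσ : m (j + 1) ≤ σ k :=
      ((hgap _).le_or_le (σ k) (subset_closure (hσ k))).resolve_left hlσ.not_ge
    have hthin := hT (j + 1) (by omega)
    have hmpos : 0 < m (j + 1) := (hpos k).trans hτm
    rw [div_lt_iff₀ hmpos, ← div_eq_inv_mul, lt_div_iff₀ (by linarith)] at hthin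
    rw [div_lt_iff₀ (hpos k)] at hkL
    nlinarith
  have hmpos : 0 < m (j + 1) :=
    ((closure_subset_Ici hE (hgap _).left_mem).out.trans_lt (hgap _).lt)
  refine ⟨j, by omega, ENNReal.ofReal_le_ofReal (hθk.le.trans ?_)⟩
  exact div_le_div₀ (hσpos.le.trans hσl) hσl hmpos hm

lemma UnivElem.exists_eq_of_isGap (h0 : (0 : ℝ) ∈ E) (hE : E ⊆ Ici 0)
    (hacc : ∀ δ > 0, ∃ t ∈ E, 0 < t ∧ t < δ) (hu : UnivElem E l m) :
    ∃ δ > 0, ∃ D ≥ 1, ∀ a b, IsGap (closure E) a b → a < δ → D * a ≤ b → ∃ j, l j = a := by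
  by_contra! h
  choose a b hgap ha hab hne using fun n : ℕ =>
    h (1 / (n + 1)) (by positivity) (n + 1) (by simp)
  have hapos : ∀ n, 0 < a n := fun n => (hgap n).left_pos hE hacc
  have hbpos : ∀ n, 0 < b n := fun n => (hapos n).trans (hgap n).lt
  have ha0 : Tendsto a atTop (𝓝 0) := squeeze_zero (fun n => (hapos n).le) (fun n => (ha n).le)
    tendsto_one_div_add_atTop_nhds_zero_nat
  have hab0 : Tendsto (fun n => a n / b n) atTop (𝓝 0) :=
    squeeze_zero (fun n => (div_pos (hapos n) (hbpos n)).le) (fun n => by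
      rw [div_le_iff₀ (hbpos n), div_mul_eq_mul_div, le_div_iff₀ (by positivity), mul_comm]
      linarith [hab n]) tendsto_one_div_add_atTop_nhds_zero_nat
  obtain ⟨φ, hφ, hanti⟩ := exists_strictAnti_subseq hapos ha0
  obtain ⟨N, f, hf⟩ := hu.2 (a ∘ φ) (b ∘ φ) ((iEd_iff h0 hE).2 ⟨fun n => hgap _,
    Eventually.of_forall fun n => (hanti n.lt_succ_self).le, ha0.comp hφ.tendsto_atTop,
    hab0.comp hφ.tendsto_atTop⟩)
  exact hne (φ N) (f N) (hf N le_rfl).symm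

lemma IEd.eventually_le_of_succ_right_le (h0 : (0 : ℝ) ∈ E) (hE : E ⊆ Ici 0)
    (hacc : ∀ δ > 0, ∃ t ∈ E, 0 < t ∧ t < δ) (hI : IEd E l m) :
    ∀ᶠ n in atTop, ∀ j, m (n + 1) ≤ l j → l n ≤ l j := by
  obtain ⟨hgap, hdec, hl0, -⟩ := (iEd_iff h0 hE).1 hI
  obtain ⟨T, hT⟩ := eventually_atTop.1 hdec
  have hanti := antitoneOn_nat_Ici_of_succ_le hT
  filter_upwards [eventually_ge_atTop T, (eventually_all_finset (Finset.range T)).2 fun j _ =>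
    hl0.eventually_lt_const ((hgap j).left_pos hE hacc)] with n hn hsmall j hj
  rcases lt_or_ge j T with hjT | hjT
  · exact (hsmall j (Finset.mem_range.2 hjT)).le
  rcases le_or_gt j n with hjn | hjn
  · exact hanti hjT hn hjn
  · exact absurd ((hanti (show T ≤ n + 1 by omega) hjT hjn).trans_lt (hgap _).lt) hj.not_gt

/-- A large ratio `lₙ / m_{n+1}` yields points of `closure E` in `[γ m_{n+1}, D γ m_{n+1}]`,
since a thin gap starting in `[m_{n+1}, lₙ)` would be some `lⱼ`, which the monotonicity of `l`
forbids. -/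
lemma MQ_le_ratioSup (h0 : (0 : ℝ) ∈ E) (hE : E ⊆ Ici 0)
    (hacc : ∀ δ > 0, ∃ t ∈ E, 0 < t ∧ t < δ) (hu : UnivElem E l m) : MQ l m ≤ ratioSup E := by
  obtain ⟨hgap, -, hl0, -⟩ := (iEd_iff h0 hE).1 hu.1
  obtain ⟨δ, hδ, D, hD, hcov⟩ := hu.exists_eq_of_isGap h0 hE hacc
  by_contra! h
  obtain ⟨γ, -, hγ, hγM⟩ := ENNReal.lt_iff_exists_real_btwn.1 h
  have hγ1 : 1 < γ := (ENNReal.ofReal_lt_ofReal_iff'.1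
    (((ratioLimit_one hacc).ofReal_le_ratioSup).trans_lt hγ)).1
  have hfreq : ∃ᶠ n in atTop, γ < l n / m (n + 1) :=
    (frequently_lt_of_lt_limsup (by isBoundedDefault) hγM).mono fun n hn =>
      (ENNReal.ofReal_lt_ofReal_iff'.1 hn).1
  obtain ⟨L, hL, hRL⟩ := exists_ratioLimit_mem_Icc (S := closure E) (c := γ) (C := D * γ)
    fun ε hε => by
      obtain ⟨n, hnγ, hnl, hnδ, hnε⟩ := (hfreq.and_eventually
        ((hu.1.eventually_le_of_succ_right_le h0 hE hacc).and ((hl0.eventually_lt_const hδ).and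
          (hl0.eventually_lt_const (mul_pos (by linarith : (0 : ℝ) < γ) hε))))).exists
      have htpos : 0 < m (n + 1) := ((hgap _).left_pos hE hacc).trans (hgap _).lt
      set t := m (n + 1)
      have hγt : γ * t < l n := by rw [lt_div_iff₀ htpos] at hnγ; linarith
      obtain ⟨x, hx, hγx, hxD⟩ := exists_mem_Icc_of_forall_isGap isClosed_closure
        (subset_closure h0) (hgap _).right_mem (hgap n).left_mem htpos.le hγ1.le hD hγt
        fun g b hb htg hgl hDg => by
          obtain ⟨j, rfl⟩ := hcov _ b hb (hgl.trans hnδ) hDg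
          exact (hnl j htg).not_gt hgl
      exact ⟨t, (hgap _).right_mem, x, hx, htpos, by nlinarith, hγx, hxD⟩
  exact hγ.not_ge ((ENNReal.ofReal_le_ofReal hL.1).trans hRL.of_closure.ofReal_le_ratioSup)

end Accumulation

lemma exists_strictAnti_range_eq {S : Set ℝ} (hpos : ∀ a ∈ S, 0 < a) (hS1 : ∀ a ∈ S, a < 1)
    (hsep : ∀ a ∈ S, ∀ a' ∈ S, a < a' → 2 * a ≤ a') (hne : ∀ x > 0, (S ∩ Iio x).Nonempty) :
    ∃ l : ℕ → ℝ, StrictAnti l ∧ Tendsto l atTop (𝓝 0) ∧ range l = S := by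
  have hgreatest : ∀ x > 0, IsGreatest (S ∩ Iio x) (sSup (S ∩ Iio x)) := fun x hx => by
    obtain ⟨y, hy⟩ := hne x hx
    have hbdd : BddAbove (S ∩ Iio x) := ⟨x, fun _ h => h.2.le⟩
    obtain ⟨a, ha, has⟩ := exists_lt_of_lt_csSup ⟨y, hy⟩
      (half_lt_self ((hpos y hy.1).trans_le (le_csSup hbdd hy)))
    have hmax : IsGreatest (S ∩ Iio x) a := ⟨ha, fun z hz => not_lt.1 fun hlt => by
      linarith [hsep a ha.1 z hz.1 hlt, le_csSup hbdd hz]⟩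
    rwa [hmax.csSup_eq]
  set next : ℝ → ℝ := fun x => sSup (S ∩ Iio x)
  have hu : ∀ n, 0 < next^[n] 1 := fun n => by
    induction n with
    | zero => exact one_pos
    | succ n ih => rw [Function.iterate_succ_apply']; exact hpos _ (hgreatest _ ih).1.1
  have hstep : ∀ n, IsGreatest (S ∩ Iio (next^[n] 1)) (next^[n + 1] 1) := fun n => by
    rw [Function.iterate_succ_apply']; exact hgreatest _ (hu n)
  set l : ℕ → ℝ := fun n => next^[n + 1] 1
  have hmem : ∀ n, l n ∈ S := fun n => (hstep n).1.1
  have hanti : StrictAnti l := strictAnti_nat_of_succ_lt fun n => (hstep (n + 1)).1.2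
  have hgeom : ∀ n, l n ≤ (1 / 2) ^ n := fun n => by
    induction n with
    | zero => exact (hstep 0).1.2.le
    | succ n ih =>
      have := hsep _ (hmem (n + 1)) _ (hmem n) (hanti n.lt_succ_self)
      rw [pow_succ]; linarith
  have hl0 : Tendsto l atTop (𝓝 0) := squeeze_zero (fun n => (hpos _ (hmem n)).le) hgeom
    (tendsto_pow_atTop_nhds_zero_of_lt_one (by norm_num) (by norm_num))
  refine ⟨l, hanti, hl0, subset_antisymm (range_subset_iff.2 hmem) fun y hy => ?_⟩
  by_contra hy'
  have hbelow : ∀ n, y < next^[n] 1 := fun n => by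
    induction n with
    | zero => exact hS1 y hy
    | succ n ih => exact ((hstep n).2 ⟨hy, ih⟩).lt_of_ne fun h => hy' ⟨n, h.symm⟩
  exact (hpos y hy).not_ge (ge_of_tendsto' hl0 fun n => (hbelow (n + 1)).le)

-- `K + 2 > K` puts these gaps beyond every ratio limit, and `K + 2 ≥ 2` separates their left ends.
def thinGapStarts (E : Set ℝ) (K : ℝ) : Set ℝ :=
  {a | ∃ b, IsGap (closure E) a b ∧ a < 1 ∧ (K + 2) * a ≤ b}

section Universal

variable {E : Set ℝ} {K : ℝ}

lemma thinGapStarts_inter_Iio_nonempty (h0 : (0 : ℝ) ∈ E) (hacc : ∀ δ > 0, ∃ t ∈ E, 0 < t ∧ t < δ)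
    (hK : ∀ L, RatioLimit E L → L ≤ K) (hK0 : 0 ≤ K) {x : ℝ} (hx : 0 < x) :
    (thinGapStarts E K ∩ Iio x).Nonempty := by
  obtain ⟨τ, hτ, hτ0⟩ := exists_seq_tendsto_zero (f := id) fun δ hδ => by
    obtain ⟨t, ht, h⟩ := hacc δ hδ; exact ⟨t, h.1, h.2, ht⟩
  have hτF : ∀ n, τ n ∈ closure E := fun n => subset_closure (hτ n).2
  choose a ha using fun n => exists_isGreatest_inter_Icc isClosed_closure (subset_closure h0)
    (u := (K + 1) * τ n) (by have := (hτ n).1; positivity)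
  have ha0 : Tendsto a atTop (𝓝 0) := squeeze_zero (fun n => (ha n).1.2.1) (fun n => (ha n).1.2.2)
    (by simpa using hτ0.const_mul (K + 1))
  obtain ⟨n, ⟨b, hb, hKb⟩, hn⟩ := ((eventually_exists_isGap hK hK0 hτF (fun n => (hτ n).1) hτ0 ha
    (by linarith : (0 : ℝ) < K + 2)).and (ha0.eventually_lt_const (lt_min hx one_pos))).exists
  exact ⟨a n, ⟨b, hb, hn.trans_le (min_le_right _ _), hKb⟩, hn.trans_le (min_le_left _ _)⟩

lemma exists_forall_isGap_mul_le (hK : ∀ L, RatioLimit E L → L ≤ K) (hE : E ⊆ Ici 0)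
    (hacc : ∀ δ > 0, ∃ t ∈ E, 0 < t ∧ t < δ) (C : ℝ) :
    ∃ δ > 0, ∀ a b, IsGap (closure E) a b → a < δ → (K + 2) * a ≤ b → C * a ≤ b := by
  by_contra! h
  obtain ⟨L, hL, hRL⟩ := exists_ratioLimit_mem_Icc (S := closure E) (c := K + 2) (C := C)
    fun ε hε => by
      obtain ⟨a, b, hb, haε, hKb, hbC⟩ := h ε hε
      exact ⟨a, hb.left_mem, b, hb.right_mem, hb.left_pos hE hacc, haε, hKb, hbC.le⟩
  linarith [hK L hRL.of_closure, hL.1]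

lemma preceq_of_range_eq_thinGapStarts (h0 : (0 : ℝ) ∈ E) (hE : E ⊆ Ici 0)
    (hacc : ∀ δ > 0, ∃ t ∈ E, 0 < t ∧ t < δ) (hK0 : 0 ≤ K) {l A B : ℕ → ℝ}
    (hrange : range l = thinGapStarts E K) (hAB : IEd E A B) : Preceq A l := by
  obtain ⟨hgap, -, hA0, hAB0⟩ := (iEd_iff h0 hE).1 hAB
  obtain ⟨N, hN⟩ := eventually_atTop.1 <| (hA0.eventually_lt_const one_pos).and
    (hAB0.eventually_lt_const (inv_pos.2 (by linarith : (0 : ℝ) < K + 2)))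
  have hthin : ∀ n, ∃ j, N ≤ n → A n = l j := fun n => by
    by_cases hn : N ≤ n
    · have hBpos := ((hgap n).left_pos hE hacc).trans (hgap n).lt
      obtain ⟨h1, h2⟩ := hN n hn
      rw [div_lt_iff₀ hBpos, ← div_eq_inv_mul, lt_div_iff₀ (by linarith)] at h2
      have hA : A n ∈ thinGapStarts E K := ⟨B n, hgap n, h1, by linarith⟩
      rw [← hrange] at hA
      obtain ⟨j, hj⟩ := hA
      exact ⟨j, fun _ => hj.symm⟩
    · exact ⟨0, fun h => absurd h hn⟩
  choose f hf using hthin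
  exact ⟨N, f, hf⟩

theorem exists_univElem (h0 : (0 : ℝ) ∈ E) (hE : E ⊆ Ici 0)
    (hacc : ∀ δ > 0, ∃ t ∈ E, 0 < t ∧ t < δ) (hK : ∀ L, RatioLimit E L → L ≤ K) (hK0 : 0 ≤ K) :
    ∃ l m, UnivElem E l m := by
  obtain ⟨l, hanti, hl0, hrange⟩ := exists_strictAnti_range_eq (S := thinGapStarts E K)
    (fun a ⟨_, hb, _⟩ => hb.left_pos hE hacc) (fun a ⟨_, _, h1, _⟩ => h1)
    (fun a ⟨b, hb, _, hKb⟩ a' ⟨_, hb', _⟩ hlt => by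
      have := hb.right_le_of_lt hb' hlt
      nlinarith [hb.left_pos hE hacc])
    fun x hx => thinGapStarts_inter_Iio_nonempty h0 hacc hK hK0 hx
  choose m hm using fun n => (hrange ▸ mem_range_self n : l n ∈ thinGapStarts E K)
  refine ⟨l, m, (iEd_iff h0 hE).2 ⟨fun n => (hm n).1, Eventually.of_forall fun n =>
    (hanti n.lt_succ_self).le, hl0, ?_⟩, fun A B hAB => ?_⟩
  · refine tendsto_div_nhds_zero_of_forall_eventually (fun n => ((hm n).1.left_pos hE hacc).le)
      (fun n => ((hm n).1.left_pos hE hacc).trans (hm n).1.lt) fun R _ => ?_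
    obtain ⟨δ, hδ, hband⟩ := exists_forall_isGap_mul_le hK hE hacc R
    filter_upwards [hl0.eventually_lt_const hδ] with n hn
    exact hband _ _ (hm n).1 hn (hm n).2.2
  · exact preceq_of_range_eq_thinGapStarts h0 hE hacc hK0 hrange hAB

end Universal

lemma exists_dist_pos_lt_of_accPt {X : Type*} [MetricSpace X] {p : X}
    (h : AccPt p (Filter.principal (Set.univ : Set X))) :
    ∀ δ > 0, ∃ t ∈ SpSet X p, 0 < t ∧ t < δ := fun δ hδ => by
  obtain ⟨y, ⟨hy, -⟩, hyp⟩ := accPt_iff_nhds.1 h _ (Metric.ball_mem_nhds p hδ)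
  exact ⟨dist y p, ⟨y, rfl⟩, dist_pos.2 hyp, hy⟩

/-- `R*_n(X,p) < ∞` iff `S_p(X)` is completely strongly porous at `0`.
Moreover, if `R*_n(X,p) < ∞` and `p` is an accumulation point of `X`, then there is a
universal `L̃ ∈ Ĩ_{S_p(X)}ᵈ` with `M(L̃) < ∞`, and `R*_n(X,p) = M(L̃)` for every
universal `L̃`. -/
theorem stmt_13 {X : Type*} [MetricSpace X] (p : X) :
    (RstarN X p < ⊤ ↔ CSP (SpSet X p)) ∧
    (RstarN X p < ⊤ → AccPt p (Filter.principal (Set.univ : Set X)) →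
      (∃ l m : ℕ → ℝ, UnivElem (SpSet X p) l m ∧ MQ l m < ⊤) ∧
      ∀ l m : ℕ → ℝ, UnivElem (SpSet X p) l m → RstarN X p = MQ l m) := by
  have h0 : (0 : ℝ) ∈ SpSet X p := ⟨p, (dist_self p).symm⟩
  have hE : SpSet X p ⊆ Ici 0 := fun _ ⟨x, hx⟩ => hx ▸ dist_nonneg
  have hbound : ratioSup (SpSet X p) < ⊤ →
      ∀ L, RatioLimit (SpSet X p) L → L ≤ (ratioSup (SpSet X p)).toReal :=
    fun h L hL => hL.le_toReal_ratioSup h.ne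
  rw [rstarN_eq_ratioSup]
  refine ⟨⟨fun h => csp_of_ratioLimit_le h0 hE (hbound h) ENNReal.toReal_nonneg,
    ratioSup_lt_top_of_csp h0 hE⟩, fun h hp => ?_⟩
  have hacc := exists_dist_pos_lt_of_accPt hp
  have hMQ : ∀ l m, UnivElem (SpSet X p) l m → ratioSup (SpSet X p) = MQ l m := fun l m hu =>
    le_antisymm (iSup₂_le fun L hL => ofReal_le_MQ h0 hE hacc hu.1 hL)
      (MQ_le_ratioSup h0 hE hacc hu)
  obtain ⟨l, m, hu⟩ := exists_univElem h0 hE hacc (hbound h) ENNReal.toReal_nonneg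
  exact ⟨⟨l, m, hu, hMQ l m hu ▸ h⟩, hMQ⟩
end

section
/- Let (X,d,p) be a pointed metric space such that there exists a normal scaling sequence for (X,d,p), and suppose R*_n(X,p) < ∞. Then there exist a normal scaling sequence (r_n) and a maximal self-stable (w.r.t. (r_n)) family F of sequences of points of X with p̃ ∈ F such that sup{ lim_{n→∞} d(x_n,p)/r_n : (x_n) ∈ F } = R*_n(X,p). -/
open Filter Topology Set
open scoped ENNReal

/-! The supremum defining `R*_n(X,p)` is attained: choose normal scaling sequences `rₖ` and
sequences `xₖ` whose limits `Lₖ = lim d(xₖₙ,p)/rₖₙ` tend to `R*_n(X,p)`, and take the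
diagonal `n ↦ rₙ(gₙ)`, `n ↦ xₙ(gₙ)` with indices `gₙ` chosen so late that the ratios are
`1/(n+1)`-close to their limits and `rₙ(gₙ)` is strictly decreasing and tends to `0`.
Any maximal self-stable family extending `{x̃, p̃}` (Zorn) then realizes the supremum. -/

theorem exists_diag_strictAnti_tendsto_zero {r : ℕ → ℕ → ℝ} {P : ℕ → ℕ → Prop}
    (hpos : ∀ k n, 0 < r k n) (hr : ∀ k, Tendsto (r k) atTop (𝓝 0))
    (hP : ∀ k, ∀ᶠ n in atTop, P k n) :
    ∃ g : ℕ → ℕ, (∀ k, P k (g k)) ∧ StrictAnti (fun k => r k (g k)) ∧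
      Tendsto (fun k => r k (g k)) atTop (𝓝 0) := by
  have hsel : ∀ k, ∀ c > 0, ∃ n, P k n ∧ r k n < c :=
    fun k c hc => ((hP k).and ((hr k).eventually_lt_const hc)).exists
  choose! sel hsel using hsel
  let g : ℕ → ℕ := fun k =>
    Nat.rec (sel 0 1) (fun m gm => sel (m + 1) (min (1 / ((m : ℝ) + 2)) (r m gm))) k
  have hsucc : ∀ k, P (k + 1) (g (k + 1)) ∧
      r (k + 1) (g (k + 1)) < min (1 / ((k : ℝ) + 2)) (r k (g k)) :=
    fun k => hsel (k + 1) _ (lt_min (by positivity) (hpos _ _))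
  have hg : ∀ k, P k (g k) ∧ r k (g k) < 1 / ((k : ℝ) + 1) := by
    rintro (_ | k)
    · rw [Nat.cast_zero, zero_add, div_one]
      exact hsel 0 1 one_pos
    · refine ⟨(hsucc k).1, (hsucc k).2.trans_le ((min_le_left _ _).trans_eq ?_)⟩
      push_cast
      ring
  refine ⟨g, fun k => (hg k).1,
    strictAnti_nat_of_succ_lt fun k => (hsucc k).2.trans_le (min_le_right _ _), ?_⟩
  exact squeeze_zero (fun k => (hpos _ _).le) (fun k => (hg k).2.le)
    tendsto_one_div_add_atTop_nhds_zero_nat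

theorem tendsto_of_dist_lt_one_div_succ {u a : ℕ → ℝ} {l : ℝ}
    (hu : ∀ k, dist (u k) (a k) < 1 / ((k : ℝ) + 1)) (ha : Tendsto a atTop (𝓝 l)) :
    Tendsto u atTop (𝓝 l) :=
  ha.congr_dist <| squeeze_zero (fun _ => dist_nonneg)
    (fun k => (dist_comm (a k) (u k)).trans_le (hu k).le) tendsto_one_div_add_atTop_nhds_zero_nat

section Stable

variable {X : Type*} [MetricSpace X] {r : ℕ → ℝ}

theorem MutuallyStable.refl (x : ℕ → X) : MutuallyStable r x x :=
  ⟨0, by simpa only [dist_self, zero_div] using tendsto_const_nhds⟩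

theorem MutuallyStable.symm {x y : ℕ → X} (h : MutuallyStable r x y) : MutuallyStable r y x := by
  obtain ⟨L, hL⟩ := h
  exact ⟨L, by simpa only [dist_comm] using hL⟩

theorem selfStable_pair {x y : ℕ → X} (h : MutuallyStable r x y) :
    SelfStable r ({x, y} : Set (ℕ → X)) := by
  rintro a (rfl | rfl) b (rfl | rfl)
  exacts [.refl _, h, h.symm, .refl _]

theorem SelfStable.exists_maxSelfStable_superset {G : Set (ℕ → X)} (hG : SelfStable r G) :
    ∃ F, G ⊆ F ∧ MaxSelfStable r F := by
  obtain ⟨F, hGF, hF⟩ := zorn_subset_nonempty {G : Set (ℕ → X) | SelfStable r G}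
    (fun c hc hchain _ => by
      refine ⟨⋃₀ c, ?_, fun s hs => subset_sUnion_of_mem hs⟩
      rintro a ⟨s, hs, has⟩ b ⟨t, ht, hbt⟩
      rcases hchain.total hs ht with hst | hts
      · exact hc ht a (hst has) b hbt
      · exact hc hs a has b (hts hbt)) G hG
  exact ⟨F, hGF, hF.1, fun H hH hFH => (hF.2 hH hFH).antisymm hFH⟩

end Stable

section Attained

variable {X : Type*} [MetricSpace X] {p : X}

theorem sSup_limits_le_rstarN {r : ℕ → ℝ} (hr : NormalScaling p r) (F : Set (ℕ → X)) :
    sSup {v | ∃ x ∈ F, ∃ L : ℝ,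
        Tendsto (fun n => dist (x n) p / r n) atTop (𝓝 L) ∧ v = ENNReal.ofReal L}
      ≤ RstarN X p :=
  sSup_le fun _ ⟨x, _, L, hx, hv⟩ => le_sSup ⟨r, x, L, hr, hx, hv⟩

theorem exists_seq_tendsto_rstarN (hn : ∃ r : ℕ → ℝ, NormalScaling p r)
    (hfin : RstarN X p < ⊤) :
    ∃ (r : ℕ → ℕ → ℝ) (x : ℕ → ℕ → X) (L : ℕ → ℝ), (∀ k, NormalScaling p (r k)) ∧
      (∀ k, Tendsto (fun n => dist (x k n) p / r k n) atTop (𝓝 (L k))) ∧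
      Tendsto L atTop (𝓝 (RstarN X p).toReal) := by
  obtain ⟨r₀, hr₀⟩ := hn
  obtain ⟨x₀, hx₀⟩ := hr₀.2.2
  obtain ⟨v, -, hv, hvS⟩ := exists_seq_tendsto_sSup (S := {v | ∃ (r : ℕ → ℝ) (x : ℕ → X) (L : ℝ),
      NormalScaling p r ∧ Tendsto (fun n => dist (x n) p / r n) atTop (𝓝 L) ∧
        v = ENNReal.ofReal L}) ⟨_, r₀, x₀, 1, hr₀, hx₀, rfl⟩ (OrderTop.bddAbove _)
  choose r x L hr hx hvL using hvS
  have hL : ∀ k, 0 ≤ L k := fun k =>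
    ge_of_tendsto' (hx k) fun n => div_nonneg dist_nonneg ((hr k).1.1 n).le
  refine ⟨r, x, L, hr, hx, ?_⟩
  simpa only [Function.comp_def, hvL, ENNReal.toReal_ofReal (hL _)] using
    (ENNReal.tendsto_toReal hfin.ne).comp hv

theorem exists_normalScaling_tendsto_rstarN (hn : ∃ r : ℕ → ℝ, NormalScaling p r)
    (hfin : RstarN X p < ⊤) :
    ∃ (r : ℕ → ℝ) (x : ℕ → X), NormalScaling p r ∧
      Tendsto (fun n => dist (x n) p / r n) atTop (𝓝 (RstarN X p).toReal) := by
  obtain ⟨r, x, L, hr, hx, hL⟩ := exists_seq_tendsto_rstarN hn hfin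
  choose y hy using fun k => (hr k).2.2
  have hε : ∀ k : ℕ, (0 : ℝ) < 1 / ((k : ℝ) + 1) := fun k => by positivity
  obtain ⟨g, hg, hanti, hzero⟩ := exists_diag_strictAnti_tendsto_zero
    (fun k => (hr k).1.1) (fun k => (hr k).1.2)
    (fun k => ((hx k).eventually (Metric.ball_mem_nhds _ (hε k))).and
      ((hy k).eventually (Metric.ball_mem_nhds _ (hε k))))
  refine ⟨fun k => r k (g k), fun k => x k (g k),
    ⟨⟨fun k => (hr k).1.1 _, hzero⟩, .of_forall fun k => (hanti k.lt_succ_self).le,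
      fun k => y k (g k), tendsto_of_dist_lt_one_div_succ (fun k => (hg k).2) tendsto_const_nhds⟩,
    tendsto_of_dist_lt_one_div_succ (fun k => (hg k).1) hL⟩

end Attained

/-- If a normal scaling sequence exists and `R*_n(X,p) < ∞`, then there
is a pretangent space with normal scaling sequence realizing the supremum, i.e. a normal
scaling sequence `r` and a maximal self-stable family `F ∋ p̃` with
`sup { lim d(xₙ,p)/rₙ : x ∈ F } = R*_n(X,p)`. -/
theorem stmt_14 {X : Type*} [MetricSpace X] (p : X)
    (hn : ∃ r : ℕ → ℝ, NormalScaling p r) (hfin : RstarN X p < ⊤) :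
    ∃ (r : ℕ → ℝ) (F : Set (ℕ → X)), NormalScaling p r ∧ MaxSelfStable r F ∧
      (fun _ => p) ∈ F ∧
      sSup {v | ∃ x ∈ F, ∃ L : ℝ,
          Tendsto (fun n => dist (x n) p / r n) atTop (𝓝 L) ∧ v = ENNReal.ofReal L}
        = RstarN X p := by
  obtain ⟨r, x, hr, hx⟩ := exists_normalScaling_tendsto_rstarN hn hfin
  have hxp : MutuallyStable r x (fun _ => p) := ⟨_, hx⟩
  obtain ⟨F, hsub, hF⟩ := (selfStable_pair hxp).exists_maxSelfStable_superset
  refine ⟨r, F, hr, hF, hsub (mem_insert_of_mem _ rfl), (sSup_limits_le_rstarN hr F).antisymm ?_⟩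
  rw [← ENNReal.ofReal_toReal hfin.ne]
  exact le_sSup ⟨x, hsub (mem_insert _ _), _, hx, rfl⟩
end

section
/- Let (X,d,p) be a pointed metric space such that there exists a normal scaling sequence for (X,d,p). Then R^n_*(X,p) > 0 if and only if R*_n(X,p) < ∞ (i.e., the family of pretangent spaces to X at p with normal scaling sequences is uniformly discrete if and only if it is uniformly bounded). Moreover, if R*_n(X,p) < ∞, then R^n_*(X,p) = 1/R*_n(X,p). -/
open Filter Topology Set
open scoped ENNReal

/-
Rescaling a normal scaling sequence `r` by a constant `c > 0` is harmless for normality as long as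
some sequence realises the limit `c` along `r`: along `c • r` that sequence realises `1`. Taking `c = L`
for a realised limit `L > 0`, the sequence that realised `1` along `r` realises `L⁻¹` along `L • r`.
So the positive realised limits are closed under inversion, which gives `Rⁿ_* = (R*_n)⁻¹` in `[0,∞]`.
-/

lemma ScalingSeq.const_mul {r : ℕ → ℝ} (hr : ScalingSeq r) {c : ℝ} (hc : 0 < c) :
    ScalingSeq (fun n => c * r n) :=
  ⟨fun n => mul_pos hc (hr.1 n), by simpa using hr.2.const_mul c⟩

lemma EvDecr.const_mul {τ : ℕ → ℝ} (hτ : EvDecr τ) {c : ℝ} (hc : 0 ≤ c) :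
    EvDecr (fun n => c * τ n) :=
  hτ.mono fun _ h => mul_le_mul_of_nonneg_left h hc

lemma tendsto_div_const_mul {f r : ℕ → ℝ} {L : ℝ} (h : Tendsto (fun n => f n / r n) atTop (𝓝 L))
    (c : ℝ) : Tendsto (fun n => f n / (c * r n)) atTop (𝓝 (L / c)) := by
  simpa only [div_div, mul_comm c] using h.div_const c

lemma NormalScaling.const_mul_of_tendsto {X : Type*} [MetricSpace X] {p : X} {r : ℕ → ℝ}
    (hr : NormalScaling p r) {x : ℕ → X} {L : ℝ}
    (hx : Tendsto (fun n => dist (x n) p / r n) atTop (𝓝 L)) (hL : 0 < L) :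
    NormalScaling p (fun n => L * r n) :=
  ⟨hr.1.const_mul hL, hr.2.1.const_mul hL.le, x, by
    simpa only [div_self hL.ne'] using tendsto_div_const_mul hx L⟩

lemma NormalScaling.exists_tendsto_inv {X : Type*} [MetricSpace X] {p : X} {r : ℕ → ℝ}
    (hr : NormalScaling p r) {x : ℕ → X} {L : ℝ}
    (hx : Tendsto (fun n => dist (x n) p / r n) atTop (𝓝 L)) (hL : 0 < L) :
    ∃ (r' : ℕ → ℝ) (x' : ℕ → X), NormalScaling p r' ∧
      Tendsto (fun n => dist (x' n) p / r' n) atTop (𝓝 L⁻¹) := by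
  obtain ⟨x₀, hx₀⟩ := hr.2.2
  exact ⟨_, x₀, hr.const_mul_of_tendsto hx hL, by
    simpa only [one_div] using tendsto_div_const_mul hx₀ L⟩

section

variable {X : Type*} [MetricSpace X] {p : X} {r : ℕ → ℝ} {x : ℕ → X} {L : ℝ}

lemma ofReal_le_rstarN (hr : NormalScaling p r)
    (hx : Tendsto (fun n => dist (x n) p / r n) atTop (𝓝 L)) :
    ENNReal.ofReal L ≤ RstarN X p :=
  le_sSup ⟨r, x, L, hr, hx, rfl⟩

lemma rlowN_le_ofReal (hr : NormalScaling p r)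
    (hx : Tendsto (fun n => dist (x n) p / r n) atTop (𝓝 L)) (hL : 0 < L) :
    RlowN X p ≤ ENNReal.ofReal L :=
  sInf_le ⟨r, x, L, hr, hx, hL, rfl⟩

end

lemma rlowN_eq_inv_rstarN {X : Type*} [MetricSpace X] (p : X) :
    RlowN X p = (RstarN X p)⁻¹ := by
  apply le_antisymm
  · rw [← inv_inv (RlowN X p), ENNReal.inv_le_inv]
    refine sSup_le ?_
    rintro _ ⟨r, x, L, hr, hx, rfl⟩
    rcases le_or_gt L 0 with hL | hL
    · simp [ENNReal.ofReal_of_nonpos hL]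
    · obtain ⟨r', x', hr', hx'⟩ := hr.exists_tendsto_inv hx hL
      have := rlowN_le_ofReal hr' hx' (inv_pos.2 hL)
      rwa [ENNReal.ofReal_inv_of_pos hL, ENNReal.le_inv_iff_le_inv] at this
  · refine le_sInf ?_
    rintro _ ⟨r, x, L, hr, hx, hL, rfl⟩
    obtain ⟨r', x', hr', hx'⟩ := hr.exists_tendsto_inv hx hL
    have := ofReal_le_rstarN hr' hx'
    rwa [ENNReal.ofReal_inv_of_pos hL, ENNReal.inv_le_iff_inv_le] at this

theorem stmt_15_general {X : Type*} [MetricSpace X] (p : X) :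
    (0 < RlowN X p ↔ RstarN X p < ⊤) ∧
    (RstarN X p < ⊤ → RlowN X p = 1 / RstarN X p) := by
  rw [rlowN_eq_inv_rstarN, ENNReal.inv_pos, one_div, lt_top_iff_ne_top]
  exact ⟨Iff.rfl, fun _ => rfl⟩

/-- If a normal scaling sequence exists, then `Rⁿ_*(X,p) > 0` iff
`R*_n(X,p) < ∞`; moreover if `R*_n(X,p) < ∞` then `Rⁿ_*(X,p) = 1 / R*_n(X,p)`. -/
theorem stmt_15 {X : Type*} [MetricSpace X] (p : X)
    (hn : ∃ r : ℕ → ℝ, NormalScaling p r) :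
    (0 < RlowN X p ↔ RstarN X p < ⊤) ∧
    (RstarN X p < ⊤ → RlowN X p = 1 / RstarN X p) :=
  stmt_15_general p
end

section
/- Let I be a nonempty index set and let 𝔉 = {(X_i, d_i, p_i) : i ∈ I} be a weakly self-similar family of pointed metric spaces such that the sphere S_i = {x ∈ X_i : d_i(x,p_i) = 1} is nonempty for every i ∈ I. Then R*(𝔉) < ∞ if and only if R_*(𝔉) > 0 (i.e., 𝔉 is uniformly bounded if and only if it is uniformly discrete w.r.t. the marked points). Moreover, if R*(𝔉) < ∞, then R_*(𝔉) = 1/R*(𝔉). -/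
open Filter Topology Set
open scoped ENNReal

/-- `ρ*(X_i)`: the supremum of distances from the marked point, in `[0,∞]`. -/
noncomputable def rhoSup {Y : Type*} [MetricSpace Y] (q : Y) : ℝ≥0∞ :=
  ⨆ y : Y, edist y q

/-- `ρ_*(X_i)`: the infimum of distances from the marked point over points distinct
from it (`∞` if there are none), in `[0,∞]`. -/
noncomputable def rhoInf {Y : Type*} [MetricSpace Y] (q : Y) : ℝ≥0∞ :=
  ⨅ y : {z : Y // z ≠ q}, edist y.1 q

/-!
Rescaling a space of the family by the distance `e = d(y, p)` of one of its points `y ≠ p` gives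
another member of the family. Every distance to the marked point is divided by `e`, so
`ρ*(X_i) / e ≤ R*`, while the image of a point of the unit sphere is a point at distance `1 / e`
from the marked point, so `R_* ≤ 1 / e`. As the unit sphere is nonempty, `1 ≤ ρ*(X_i)`, so the
first bound gives `1 / R* ≤ e`, and letting `y` range over all points gives `1 / R* ≤ R_*` and
`R* ≤ 1 / R_*`. Hence `R_* = 1 / R*`, unconditionally in `[0, ∞]`, which contains both claims.
-/

def WeaklySelfSimilar {I : Type*} (X : I → Type*) [∀ i, MetricSpace (X i)] (p : ∀ i, X i) :
    Prop :=
  ∀ i : I, ∀ t : ℝ, t ≠ 0 → (∃ x : X i, t = dist x (p i)) →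
    ∃ (j : I) (f : X i → X j), Function.Bijective f ∧ f (p i) = p j ∧
      ∀ x y : X i, dist (f x) (f y) = dist x y / t

section PointedSpace

variable {Y : Type*} [MetricSpace Y]

theorem edist_le_rhoSup (y q : Y) : edist y q ≤ rhoSup q :=
  le_iSup (fun z => edist z q) y

theorem rhoInf_le_edist {y q : Y} (hy : y ≠ q) : rhoInf q ≤ edist y q :=
  iInf_le (fun z : {z : Y // z ≠ q} => edist z.1 q) ⟨y, hy⟩

theorem one_le_rhoSup {y q : Y} (hy : dist y q = 1) : 1 ≤ rhoSup q := by
  simpa [edist_dist, hy] using edist_le_rhoSup y q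

end PointedSpace

section Family

variable {I : Type*} {X : I → Type*} [∀ i, MetricSpace (X i)] {p : ∀ i, X i}

theorem WeaklySelfSimilar.exists_rescale (hss : WeaklySelfSimilar X p) {i : I} {y : X i}
    (hy : y ≠ p i) :
    ∃ (j : I) (f : X i → X j), Function.Injective f ∧ f (p i) = p j ∧
      ∀ x, edist (f x) (p j) = edist x (p i) / edist y (p i) := by
  have hpos : 0 < dist y (p i) := dist_pos.mpr hy
  obtain ⟨j, f, hbij, hfp, hf⟩ := hss i _ hpos.ne' ⟨y, rfl⟩
  refine ⟨j, f, hbij.injective, hfp, fun x => ?_⟩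
  rw [← hfp, edist_dist, edist_dist, edist_dist, hf, ENNReal.ofReal_div_of_pos hpos]

theorem WeaklySelfSimilar.iSup_rhoSup_le_inv_iInf_rhoInf (hss : WeaklySelfSimilar X p)
    (hsph : ∀ i : I, ∃ x : X i, dist x (p i) = 1) :
    ⨆ i, rhoSup (p i) ≤ (⨅ i, rhoInf (p i))⁻¹ := by
  refine iSup_le fun i => iSup_le fun y => ?_
  rcases eq_or_ne y (p i) with rfl | hy
  · simp
  obtain ⟨j, f, hinj, hfp, hf⟩ := hss.exists_rescale hy
  obtain ⟨s, hs⟩ := hsph i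
  have hs_ne : s ≠ p i := by rintro rfl; simp at hs
  have hfs : edist (f s) (p j) = (edist y (p i))⁻¹ := by
    rw [hf, edist_dist, hs, ENNReal.ofReal_one, one_div]
  have hfs_ne : f s ≠ p j := hfp ▸ hinj.ne hs_ne
  rw [ENNReal.le_inv_iff_le_inv]
  calc ⨅ k, rhoInf (p k) ≤ rhoInf (p j) := iInf_le _ j
    _ ≤ edist (f s) (p j) := rhoInf_le_edist hfs_ne
    _ = (edist y (p i))⁻¹ := hfs

theorem WeaklySelfSimilar.inv_iSup_rhoSup_le_iInf_rhoInf (hss : WeaklySelfSimilar X p)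
    (hsph : ∀ i : I, ∃ x : X i, dist x (p i) = 1) :
    (⨆ i, rhoSup (p i))⁻¹ ≤ ⨅ i, rhoInf (p i) := by
  refine le_iInf fun i => le_iInf fun ⟨y, hy⟩ => ?_
  obtain ⟨j, f, -, -, hf⟩ := hss.exists_rescale hy
  obtain ⟨s, hs⟩ := hsph i
  rw [ENNReal.inv_le_iff_inv_le, ← one_div]
  calc 1 / edist y (p i) ≤ rhoSup (p i) / edist y (p i) := by gcongr; exact one_le_rhoSup hs
    _ = ⨆ x, edist (f x) (p j) := by simp only [rhoSup, ENNReal.iSup_div, hf]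
    _ ≤ ⨆ k, rhoSup (p k) :=
      iSup_le fun x => (edist_le_rhoSup _ _).trans (le_iSup (fun k => rhoSup (p k)) j)

theorem WeaklySelfSimilar.iInf_rhoInf_eq_inv_iSup_rhoSup (hss : WeaklySelfSimilar X p)
    (hsph : ∀ i : I, ∃ x : X i, dist x (p i) = 1) :
    ⨅ i, rhoInf (p i) = (⨆ i, rhoSup (p i))⁻¹ :=
  le_antisymm (ENNReal.le_inv_iff_le_inv.mp (hss.iSup_rhoSup_le_inv_iInf_rhoInf hsph))
    (hss.inv_iSup_rhoSup_le_iInf_rhoInf hsph)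

end Family

theorem stmt_16_general {I : Type*} (X : I → Type*) [∀ i, MetricSpace (X i)]
    (p : ∀ i, X i)
    (hss : ∀ i : I, ∀ t : ℝ, t ≠ 0 → (∃ x : X i, t = dist x (p i)) →
      ∃ (j : I) (f : X i → X j), Function.Bijective f ∧ f (p i) = p j ∧
        ∀ x y : X i, dist (f x) (f y) = dist x y / t)
    (hsph : ∀ i : I, ∃ x : X i, dist x (p i) = 1) :
    ((⨆ i, rhoSup (p i)) < ⊤ ↔ 0 < ⨅ i, rhoInf (p i)) ∧
    ((⨆ i, rhoSup (p i)) < ⊤ → (⨅ i, rhoInf (p i)) = 1 / ⨆ i, rhoSup (p i)) := by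
  have hR : ⨅ i, rhoInf (p i) = (⨆ i, rhoSup (p i))⁻¹ :=
    WeaklySelfSimilar.iInf_rhoInf_eq_inv_iSup_rhoSup hss hsph
  rw [hR, ENNReal.inv_pos, one_div]
  exact ⟨lt_top_iff_ne_top, fun _ => rfl⟩

/-- A weakly self-similar family of pointed metric spaces with all unit
spheres nonempty is uniformly bounded iff it is uniformly discrete; moreover, if it is
uniformly bounded then `R_*(𝔉) = 1 / R*(𝔉)`. -/
theorem stmt_16 {I : Type*} [Nonempty I] (X : I → Type*) [∀ i, MetricSpace (X i)]
    (p : ∀ i, X i)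
    (hss : ∀ i : I, ∀ t : ℝ, t ≠ 0 → (∃ x : X i, t = dist x (p i)) →
      ∃ (j : I) (f : X i → X j), Function.Bijective f ∧ f (p i) = p j ∧
        ∀ x y : X i, dist (f x) (f y) = dist x y / t)
    (hsph : ∀ i : I, ∃ x : X i, dist x (p i) = 1) :
    ((⨆ i, rhoSup (p i)) < ⊤ ↔ 0 < ⨅ i, rhoInf (p i)) ∧
    ((⨆ i, rhoSup (p i)) < ⊤ → (⨅ i, rhoInf (p i)) = 1 / ⨆ i, rhoSup (p i)) :=
  stmt_16_general X p hss hsph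
end
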